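/- arXiv:1311.0885 — 11 statements merged into one kernel-verified Lean document; each statement's English description precedes it below -/
import Mathlib

section
/- Let δ₁ : Matrix (Fin M₁) (Fin M₁) (ZMod 2) and δ₂ : Matrix (Fin M₂) (Fin M₂) (ZMod 2) satisfy δ₁·δ₁ = 0 and δ₂·δ₂ = 0. Consider the linear map ∂ on Matrix (Fin M₁) (Fin M₂) (ZMod 2) given by ∂ψ = δ₁·ψ + ψ·δ₂ᵀ. Then the kernel of ∂ equals the sum (as submodules of the space of M₁×M₂ matrices over ZMod 2) of the submodule T = {ψ : δ₁·ψ = 0 ∧ ψ·δ₂ᵀ = 0} and the range of ∂. (T is precisely ker δ₁ ⊗ ker δ₂, the matrices whose column space lies in ker δ₁ and whose row space lies in ker δ₂.) -/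
open Matrix

/-- Every square matrix over `ZMod 2` has a generalized inverse. -/
lemma exists_ginv (n : ℕ) (A : Matrix (Fin n) (Fin n) (ZMod 2)) :
    ∃ G : Matrix (Fin n) (Fin n) (ZMod 2), A * G * A = A := by
  set f := Matrix.toLin' A with hf
  obtain ⟨q, hq⟩ := Submodule.exists_isCompl (LinearMap.range f)
  obtain ⟨s, hs⟩ := f.rangeRestrict.exists_rightInverse_of_surjective
    (LinearMap.range_rangeRestrict f)
  let g := s ∘ₗ (LinearMap.range f).linearProjOfIsCompl q hq
  refine ⟨LinearMap.toMatrix' g, ?_⟩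
  apply Matrix.toLin'.injective
  rw [Matrix.toLin'_mul, Matrix.toLin'_mul, Matrix.toLin'_toMatrix']
  refine LinearMap.ext fun x => ?_
  have hmem : f x ∈ LinearMap.range f := LinearMap.mem_range_self f x
  have hproj : (LinearMap.range f).linearProjOfIsCompl q hq (f x) = ⟨f x, hmem⟩ :=
    Submodule.linearProjOfIsCompl_apply_left hq ⟨f x, hmem⟩
  have hfs : f (s ⟨f x, hmem⟩) = f x := congrArg Subtype.val (LinearMap.congr_fun hs ⟨f x, hmem⟩)
  simp only [hf, Matrix.toLin'_apply] at hproj hfs ⊢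
  simpa [g, hproj] using hfs

/-- Künneth formula (kernel form): for boundary operators `δ₁`, `δ₂` with square zero,
the kernel of the product boundary map `∂ψ = δ₁ψ + ψδ₂ᵀ` equals the sum of the submodule
`T = ker δ₁ ⊗ ker δ₂ = {ψ : δ₁ψ = 0 ∧ ψδ₂ᵀ = 0}` and the range of `∂`. -/
theorem kunneth_kernel (M₁ M₂ : ℕ)
    (δ₁ : Matrix (Fin M₁) (Fin M₁) (ZMod 2)) (δ₂ : Matrix (Fin M₂) (Fin M₂) (ZMod 2))
    (h₁ : δ₁ * δ₁ = 0) (h₂ : δ₂ * δ₂ = 0)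
    (bnd : Matrix (Fin M₁) (Fin M₂) (ZMod 2) →ₗ[ZMod 2] Matrix (Fin M₁) (Fin M₂) (ZMod 2))
    (hbnd : ∀ ψ, bnd ψ = δ₁ * ψ + ψ * δ₂ᵀ)
    (T : Submodule (ZMod 2) (Matrix (Fin M₁) (Fin M₂) (ZMod 2)))
    (hT : ∀ ψ, ψ ∈ T ↔ δ₁ * ψ = 0 ∧ ψ * δ₂ᵀ = 0) :
    LinearMap.ker bnd = T ⊔ LinearMap.range bnd := by
  obtain ⟨g₁, hg₁⟩ := exists_ginv M₁ δ₁
  obtain ⟨g₂, hg₂⟩ := exists_ginv M₂ δ₂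
  set e := δ₂ᵀ with he_def
  set k := g₂ᵀ with hk_def
  have hee : e * e = 0 := by
    rw [he_def, ← Matrix.transpose_mul, h₂, Matrix.transpose_zero]
  have heke : e * k * e = e := by
    have h := congrArg Matrix.transpose hg₂
    simpa [Matrix.transpose_mul, Matrix.mul_assoc, ← he_def, ← hk_def] using h
  have hneg : ∀ a : Matrix (Fin M₁) (Fin M₂) (ZMod 2), -a = a := by
    intro a; ext i j; rw [Matrix.neg_apply]; exact CharTwo.neg_eq _
  have hself : ∀ a : Matrix (Fin M₁) (Fin M₂) (ZMod 2), a + a = 0 := by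
    intro a; ext i j; rw [Matrix.add_apply, Matrix.zero_apply]; exact CharTwo.add_self_eq_zero _
  set π : Matrix (Fin M₁) (Fin M₁) (ZMod 2) := 1 - δ₁ * g₁ - g₁ * δ₁ with hπ_def
  set q : Matrix (Fin M₂) (Fin M₂) (ZMod 2) := 1 - k * e - e * k with hq_def
  have hδπ : δ₁ * π = 0 := by
    rw [hπ_def, Matrix.mul_sub, Matrix.mul_sub, Matrix.mul_one,
      ← Matrix.mul_assoc, ← Matrix.mul_assoc, h₁, hg₁, Matrix.zero_mul, sub_zero, sub_self]
  have hπδ : π * δ₁ = 0 := by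
    rw [hπ_def, Matrix.sub_mul, Matrix.sub_mul, Matrix.one_mul, hg₁,
      Matrix.mul_assoc, h₁, Matrix.mul_zero]
    simp
  have hqe : q * e = 0 := by
    rw [hq_def, Matrix.sub_mul, Matrix.sub_mul, Matrix.one_mul, heke,
      Matrix.mul_assoc, hee, Matrix.mul_zero]
    simp
  apply le_antisymm
  · -- hard direction: ker ⊆ T ⊔ range
    intro ψ hψ
    rw [LinearMap.mem_ker, hbnd] at hψ
    have hcomm : ψ * e = δ₁ * ψ := by
      have h' := eq_neg_of_add_eq_zero_left hψ
      rw [hneg] at h'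
      exact h'.symm
    refine Submodule.mem_sup.mpr ⟨π * ψ * q, ?_, bnd (g₁ * ψ + π * ψ * k), ⟨_, rfl⟩, ?_⟩
    · rw [hT]
      constructor
      · rw [← Matrix.mul_assoc, ← Matrix.mul_assoc, hδπ, Matrix.zero_mul, Matrix.zero_mul]
      · rw [Matrix.mul_assoc, hqe, Matrix.mul_zero]
    · rw [hbnd]
      have e1 : δ₁ * (g₁ * ψ + π * ψ * k) = δ₁ * (g₁ * ψ) := by
        have h0 : δ₁ * (π * ψ * k) = 0 := by
          rw [← Matrix.mul_assoc, ← Matrix.mul_assoc, hδπ, Matrix.zero_mul, Matrix.zero_mul]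
        rw [Matrix.mul_add, h0, add_zero]
      have e2 : (g₁ * ψ) * e = g₁ * (δ₁ * ψ) := by rw [Matrix.mul_assoc, hcomm]
      have e3 : (π * ψ * k) * e = π * ψ * (k * e) := Matrix.mul_assoc _ _ _
      have e4 : π * ψ * (e * k) = 0 := by
        rw [← Matrix.mul_assoc, Matrix.mul_assoc π ψ e, hcomm, ← Matrix.mul_assoc, hπδ,
          Matrix.zero_mul, Matrix.zero_mul]
      have e5 : π * ψ * q = π * ψ - π * ψ * (k * e) := by
        rw [hq_def, Matrix.mul_sub, Matrix.mul_sub, Matrix.mul_one, e4, sub_zero]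
      have e6 : π + δ₁ * g₁ + g₁ * δ₁ = 1 := by rw [hπ_def]; abel
      have e7 : π * ψ + δ₁ * (g₁ * ψ) + g₁ * (δ₁ * ψ) = ψ := by
        rw [← Matrix.mul_assoc, ← Matrix.mul_assoc, ← Matrix.add_mul, ← Matrix.add_mul, e6,
          Matrix.one_mul]
      rw [e5, e1, Matrix.add_mul, e2, e3]
      calc (π * ψ - π * ψ * (k * e)) + (δ₁ * (g₁ * ψ) + (g₁ * (δ₁ * ψ) + π * ψ * (k * e)))
          = π * ψ + δ₁ * (g₁ * ψ) + g₁ * (δ₁ * ψ) := by abel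
        _ = ψ := e7
  · -- easy direction: T ⊔ range ⊆ ker
    apply sup_le
    · intro ψ hψ
      obtain ⟨ha, hb⟩ := (hT ψ).mp hψ
      rw [LinearMap.mem_ker, hbnd, ha, hb, add_zero]
    · rintro ψ ⟨φ, rfl⟩
      rw [LinearMap.mem_ker, hbnd, hbnd]
      rw [Matrix.mul_add, Matrix.add_mul, ← Matrix.mul_assoc, h₁, Matrix.zero_mul,
        Matrix.mul_assoc φ e e, hee, Matrix.mul_zero, zero_add, add_zero, ← Matrix.mul_assoc]
      exact hself _
end

section
/- Let δ₁ : Matrix (Fin M₁) (Fin M₁) (ZMod 2) and δ₂ : Matrix (Fin M₂) (Fin M₂) (ZMod 2) satisfy δ₁·δ₁ = 0 and δ₂·δ₂ = 0, and let ∂ be the linear map on Matrix (Fin M₁) (Fin M₂) (ZMod 2) given by ∂ψ = δ₁·ψ + ψ·δ₂ᵀ. Then the homological dimension of ∂ is the product of those of δ₁ and δ₂: M₁·M₂ − 2·finrank(range ∂) = (M₁ − 2·rank δ₁)·(M₂ − 2·rank δ₂). -/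
/-!
Identify `M₁ × M₂` matrices with linear maps `L : V₂ → V₁`, so that `∂ L = f ∘ L + L ∘ g` with
`f² = 0` and `g² = 0`. On the cycles of `∂`, the map `L ↦ f ∘ L` has image the maps vanishing on
`ker g` with values in `range f`, and kernel the maps vanishing on `range g` with values in `ker f`.
Counting dimensions gives `dim ker ∂ = rk f · rk g + dim ker f · dim ker g`, and rank–nullity turns
this into the product formula for `dim − 2 · rank`.
-/

open Module LinearMap

namespace LinearMap

section Factorization

variable {K U V W X : Type*} [Field K] [AddCommGroup U] [Module K U] [AddCommGroup V]
  [Module K V] [AddCommGroup W] [Module K W] [AddCommGroup X] [Module K X]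

theorem exists_comp_eq_of_ker_le {g : V →ₗ[K] W} {h : V →ₗ[K] X} (hgh : ker g ≤ ker h) :
    ∃ h' : W →ₗ[K] X, h' ∘ₗ g = h := by
  obtain ⟨h', hh'⟩ := IsSemisimpleModule.extension_property ((ker g).liftQ g le_rfl)
    (ker_eq_bot.mp ((ker g).ker_liftQ_eq_bot _ _ le_rfl)) ((ker g).liftQ h hgh)
  refine ⟨h', ?_⟩
  ext x
  simpa using congr($hh' ((ker g).mkQ x))

theorem exists_comp_comp_eq {f : U →ₗ[K] X} {g : V →ₗ[K] W} {h : V →ₗ[K] X}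
    (hgh : ker g ≤ ker h) (hhf : range h ≤ range f) :
    ∃ L : W →ₗ[K] U, f ∘ₗ L ∘ₗ g = h := by
  obtain ⟨h', hh'⟩ := exists_comp_eq_of_ker_le (g := g)
    (h := h.codRestrict (range f) fun x ↦ hhf ⟨x, rfl⟩) (by rwa [ker_codRestrict])
  obtain ⟨L, hL⟩ := IsSemisimpleModule.lifting_property _ f.surjective_rangeRestrict h'
  refine ⟨L, ?_⟩
  ext x
  calc f (L (g x)) = h' (g x) := congr(Subtype.val ($hL (g x)))
    _ = h x := congr(Subtype.val ($hh' x))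

end Factorization

end LinearMap

theorem Submodule.finrank_map_add_finrank_inf_ker {K V W : Type*} [Field K] [AddCommGroup V]
    [Module K V] [AddCommGroup W] [Module K W] [FiniteDimensional K V]
    (p : Submodule K V) (φ : V →ₗ[K] W) :
    finrank K (p.map φ) + finrank K (p ⊓ ker φ : Submodule K V) = finrank K p := by
  rw [← range_domRestrict, ← map_comap_subtype, ← ker_domRestrict, finrank_map_subtype_eq,
    finrank_range_add_finrank_ker]

namespace LinearMap

variable {K V W : Type*} [Field K] [AddCommGroup V] [Module K V] [AddCommGroup W] [Module K W]

noncomputable def homsVanishingOnInto (T : Submodule K V) (S : Submodule K W) :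
    Submodule K (V →ₗ[K] W) :=
  range (S.subtype.compRight K ∘ₗ T.mkQ.lcomp K S)

theorem mem_homsVanishingOnInto {T : Submodule K V} {S : Submodule K W} {h : V →ₗ[K] W} :
    h ∈ homsVanishingOnInto T S ↔ T ≤ ker h ∧ range h ≤ S := by
  constructor
  · rintro ⟨χ, rfl⟩
    refine ⟨fun x hx ↦ ?_, ?_⟩
    · simp [(Submodule.Quotient.mk_eq_zero T).mpr hx]
    · rintro _ ⟨x, rfl⟩
      simp
  · rintro ⟨hT, hS⟩
    exact ⟨T.liftQ (h.codRestrict S fun x ↦ hS ⟨x, rfl⟩) (by rwa [ker_codRestrict]), by ext; simp⟩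

theorem finrank_homsVanishingOnInto [FiniteDimensional K V] [FiniteDimensional K W]
    (T : Submodule K V) (S : Submodule K W) :
    finrank K (homsVanishingOnInto T S) = finrank K (V ⧸ T) * finrank K S := by
  rw [homsVanishingOnInto, finrank_range_of_inj, finrank_linearMap]
  intro χ₁ χ₂ h
  ext x
  exact congr($h x)

/-- The boundary `f ⊗ 1 + 1 ⊗ gᵀ` of `W ⊗ V* ≅ Hom(V, W)`. -/
noncomputable def productBoundary (f : W →ₗ[K] W) (g : V →ₗ[K] V) :
    (V →ₗ[K] W) →ₗ[K] (V →ₗ[K] W) :=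
  f.compRight K + g.lcomp K W

theorem productBoundary_apply (f : W →ₗ[K] W) (g : V →ₗ[K] V) (L : V →ₗ[K] W) :
    productBoundary f g L = f ∘ₗ L + L ∘ₗ g := rfl

theorem ker_productBoundary_inf_ker_compRight (f : W →ₗ[K] W) (g : V →ₗ[K] V) :
    ker (productBoundary f g) ⊓ ker (f.compRight K) = homsVanishingOnInto (range g) (ker f) := by
  ext L
  simp only [Submodule.mem_inf, mem_ker, productBoundary_apply, compRight_apply,
    mem_homsVanishingOnInto, range_le_ker_iff]
  constructor
  · rintro ⟨hΩ, hf⟩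
    exact ⟨by simpa [hf] using hΩ, hf⟩
  · rintro ⟨hg, hf⟩
    exact ⟨by simp [hf, hg], hf⟩

theorem map_compRight_ker_productBoundary {f : W →ₗ[K] W} {g : V →ₗ[K] V}
    (hf : f ∘ₗ f = 0) (hg : g ∘ₗ g = 0) :
    (ker (productBoundary f g)).map (f.compRight K) = homsVanishingOnInto (ker g) (range f) := by
  ext h
  rw [mem_homsVanishingOnInto]
  constructor
  · rintro ⟨L, hL : f ∘ₗ L + L ∘ₗ g = 0, rfl⟩
    refine ⟨fun x hx ↦ ?_, range_comp_le_range _ _⟩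
    simpa [mem_ker.mp hx] using congr($hL x)
  · rintro ⟨hker, hrange⟩
    obtain ⟨L, rfl⟩ := exists_comp_comp_eq hker hrange
    -- `L ∘ g - f ∘ L` is a cycle with the same image under `f ∘ -` as `L ∘ g`.
    refine ⟨L ∘ₗ g - f ∘ₗ L, ?_, ?_⟩
    · have hff (y : W) : f (f y) = 0 := by simpa using congr($hf y)
      have hgg (x : V) : g (g x) = 0 := by simpa using congr($hg x)
      ext x
      simp [productBoundary_apply, hff, hgg]
    · simp [comp_sub, ← comp_assoc, hf]

theorem finrank_ker_productBoundary [FiniteDimensional K V] [FiniteDimensional K W]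
    {f : W →ₗ[K] W} {g : V →ₗ[K] V} (hf : f ∘ₗ f = 0) (hg : g ∘ₗ g = 0) :
    finrank K (ker (productBoundary f g)) =
      finrank K (range f) * finrank K (range g) + finrank K (ker f) * finrank K (ker g) := by
  have hquot : finrank K (V ⧸ range g) = finrank K (ker g) := by
    have := (range g).finrank_quotient_add_finrank
    have := g.finrank_range_add_finrank_ker
    omega
  rw [← (ker (productBoundary f g)).finrank_map_add_finrank_inf_ker (f.compRight K),
    map_compRight_ker_productBoundary hf hg, ker_productBoundary_inf_ker_compRight,
    finrank_homsVanishingOnInto, finrank_homsVanishingOnInto, g.quotKerEquivRange.finrank_eq,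
    hquot, mul_comm, mul_comm (finrank K (ker g))]

/-- The dimension of `ker f ⧸ range f` when `f ∘ f = 0`. -/
noncomputable def homologicalDim (f : V →ₗ[K] V) : ℤ :=
  finrank K V - 2 * finrank K (range f)

theorem homologicalDim_productBoundary [FiniteDimensional K V] [FiniteDimensional K W]
    {f : W →ₗ[K] W} {g : V →ₗ[K] V} (hf : f ∘ₗ f = 0) (hg : g ∘ₗ g = 0) :
    homologicalDim (productBoundary f g) = homologicalDim f * homologicalDim g := by
  have hΩ := (productBoundary f g).finrank_range_add_finrank_ker
  have hf' := f.finrank_range_add_finrank_ker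
  have hg' := g.finrank_range_add_finrank_ker
  rw [finrank_linearMap, finrank_ker_productBoundary hf hg] at hΩ
  zify at hΩ hf' hg'
  simp only [homologicalDim, finrank_linearMap, Nat.cast_mul]
  rw [← hf', ← hg'] at hΩ ⊢
  linear_combination (-2 : ℤ) * hΩ

end LinearMap

theorem LinearEquiv.finrank_range_eq_of_comp_eq {K M N : Type*} [Field K] [AddCommGroup M]
    [Module K M] [AddCommGroup N] [Module K N] (e : M ≃ₗ[K] N) {A : M →ₗ[K] M} {B : N →ₗ[K] N}
    (h : e.toLinearMap ∘ₗ A = B ∘ₗ e.toLinearMap) :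
    finrank K (range A) = finrank K (range B) := by
  rw [← range_comp_of_range_eq_top B e.range, ← h, LinearMap.range_comp, e.finrank_map_eq]

open Matrix

/-- Künneth formula (dimension form): the homological dimension of the product boundary
map `∂ψ = δ₁ψ + ψδ₂ᵀ` is the product of the homological dimensions of `δ₁` and `δ₂`:
`M₁M₂ − 2·dim(range ∂) = (M₁ − 2 rank δ₁)(M₂ − 2 rank δ₂)`. -/
theorem kunneth_homological_dimension (M₁ M₂ : ℕ)
    (δ₁ : Matrix (Fin M₁) (Fin M₁) (ZMod 2)) (δ₂ : Matrix (Fin M₂) (Fin M₂) (ZMod 2))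
    (h₁ : δ₁ * δ₁ = 0) (h₂ : δ₂ * δ₂ = 0)
    (bnd : Matrix (Fin M₁) (Fin M₂) (ZMod 2) →ₗ[ZMod 2] Matrix (Fin M₁) (Fin M₂) (ZMod 2))
    (hbnd : ∀ ψ, bnd ψ = δ₁ * ψ + ψ * δ₂ᵀ) :
    (M₁ : ℤ) * (M₂ : ℤ) - 2 * (Module.finrank (ZMod 2) (LinearMap.range bnd) : ℤ) =
      ((M₁ : ℤ) - 2 * (δ₁.rank : ℤ)) * ((M₂ : ℤ) - 2 * (δ₂.rank : ℤ)) := by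
  have hf : δ₁.mulVecLin ∘ₗ δ₁.mulVecLin = 0 := by rw [← mulVecLin_mul, h₁, mulVecLin_zero]
  have hg : δ₂ᵀ.mulVecLin ∘ₗ δ₂ᵀ.mulVecLin = 0 := by
    rw [← mulVecLin_mul, ← transpose_mul, h₂, transpose_zero, mulVecLin_zero]
  have hconj : toLin'.toLinearMap ∘ₗ bnd =
      productBoundary δ₁.mulVecLin δ₂ᵀ.mulVecLin ∘ₗ toLin'.toLinearMap := by
    ext1 ψ
    simp [hbnd, productBoundary_apply, toLin'_apply']
  have hdim := homologicalDim_productBoundary hf hg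
  rw [homologicalDim, homologicalDim, homologicalDim, finrank_linearMap,
    ← toLin'.finrank_range_eq_of_comp_eq hconj] at hdim
  rw [← rank_transpose δ₂]
  simpa [Matrix.rank, mul_comm] using hdim
end

section
/- Let δ₁ : Matrix (Fin M₁) (Fin M₁) (ZMod 2) and δ₂ : Matrix (Fin M₂) (Fin M₂) (ZMod 2) satisfy δ₁·δ₁ = 0 and δ₂·δ₂ = 0. Suppose u : Fin M₁ → ZMod 2 satisfies δ₁·u = 0 and u is not in the column space of δ₁, and v : Fin M₂ → ZMod 2 satisfies δ₂·v = 0 and v is not in the column space of δ₂. Let ψ be the outer product matrix ψ i j = u i · v j. Then: (i) δ₁·ψ + ψ·δ₂ᵀ = 0; (ii) ψ is not of the form δ₁·φ + φ·δ₂ᵀ for any M₁×M₂ matrix φ; and (iii) wt(ψ) = wt(u)·wt(v). In particular the minimum weight of a nontrivial cycle of the product boundary map is at most the product of the minimum weights of nontrivial cycles of δ₁ and δ₂. -/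
open Matrix

/-- The weight of a vector over `ZMod 2`: its number of nonzero entries. -/
def wt {n : ℕ} (v : Fin n → ZMod 2) : ℕ :=
  (Finset.univ.filter fun i => v i ≠ 0).card

/-- The weight of a matrix over `ZMod 2`: its number of nonzero entries. -/
def mwt {m n : ℕ} (A : Matrix (Fin m) (Fin n) (ZMod 2)) : ℕ :=
  (Finset.univ.filter fun p : Fin m × Fin n => A p.1 p.2 ≠ 0).card

/-- The outer product of a nontrivial cycle of `δ₁` and a nontrivial cycle of `δ₂` is a
nontrivial cycle of the product boundary map `∂ψ = δ₁ψ + ψδ₂ᵀ`, of weight `wt(u)·wt(v)`.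
In particular the minimum weight of a nontrivial cycle of `∂` is at most the product of
the minimum weights of nontrivial cycles of `δ₁` and `δ₂`. -/
theorem product_cycle_upper_bound (M₁ M₂ : ℕ)
    (δ₁ : Matrix (Fin M₁) (Fin M₁) (ZMod 2)) (δ₂ : Matrix (Fin M₂) (Fin M₂) (ZMod 2))
    (h₁ : δ₁ * δ₁ = 0) (h₂ : δ₂ * δ₂ = 0)
    (u : Fin M₁ → ZMod 2) (hu₁ : δ₁.mulVec u = 0)
    (hu₂ : ¬ ∃ x : Fin M₁ → ZMod 2, δ₁.mulVec x = u)
    (v : Fin M₂ → ZMod 2) (hv₁ : δ₂.mulVec v = 0)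
    (hv₂ : ¬ ∃ y : Fin M₂ → ZMod 2, δ₂.mulVec y = v)
    (ψ : Matrix (Fin M₁) (Fin M₂) (ZMod 2)) (hψ : ∀ i j, ψ i j = u i * v j) :
    δ₁ * ψ + ψ * δ₂ᵀ = 0 ∧
    (¬ ∃ φ : Matrix (Fin M₁) (Fin M₂) (ZMod 2), ψ = δ₁ * φ + φ * δ₂ᵀ) ∧
    mwt ψ = wt u * wt v := by
  refine ⟨?_, ?_, ?_⟩
  · -- boundary of ψ is zero
    ext i j
    have e1 : (δ₁ * ψ) i j = (δ₁.mulVec u) i * v j := by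
      simp only [Matrix.mul_apply, Matrix.mulVec, dotProduct, Finset.sum_mul]
      exact Finset.sum_congr rfl fun k _ => by rw [hψ]; ring
    have e2 : (ψ * δ₂ᵀ) i j = u i * (δ₂.mulVec v) j := by
      simp only [Matrix.mul_apply, Matrix.mulVec, dotProduct, Finset.mul_sum,
        Matrix.transpose_apply]
      exact Finset.sum_congr rfl fun k _ => by rw [hψ]; ring
    simp [e1, e2, hu₁, hv₁]
  · -- nontriviality
    rintro ⟨φ, hφ⟩
    set p : Submodule (ZMod 2) (Fin M₂ → ZMod 2) := LinearMap.range δ₂.mulVecLin with hp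
    have hvp : v ∉ p := by
      rintro ⟨y, hy⟩
      exact hv₂ ⟨y, hy⟩
    obtain ⟨f, hfv, hfp⟩ := p.exists_dual_map_eq_bot_of_notMem hvp inferInstance
    have hfz : ∀ y : Fin M₂ → ZMod 2, f (δ₂.mulVec y) = 0 := by
      intro y
      have : f (δ₂.mulVec y) ∈ p.map f := ⟨δ₂.mulVec y, ⟨y, rfl⟩, rfl⟩
      rwa [hfp, Submodule.mem_bot] at this
    set w : Fin M₂ → ZMod 2 := fun j => f (fun k => if j = k then 1 else 0) with hw
    have hfrep : ∀ x : Fin M₂ → ZMod 2, f x = ∑ j, x j * w j := by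
      intro x
      rw [LinearMap.pi_apply_eq_sum_univ f x]
      simp [hw, smul_eq_mul]
    have hw0 : δ₂ᵀ.mulVec w = 0 := by
      funext k
      have hz := hfz (fun j => if k = j then 1 else 0)
      rw [hfrep] at hz
      simp only [Matrix.mulVec, dotProduct, Matrix.transpose_apply, Pi.zero_apply]
      rw [← hz]
      refine Finset.sum_congr rfl fun j _ => ?_
      congr 1
      simp [Matrix.mulVec, dotProduct]
    have hfv1 : f v = 1 := by
      have h01 : ∀ x : ZMod 2, x = 0 ∨ x = 1 := by decide
      rcases h01 (f v) with h | h
      · exact absurd h hfv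
      · exact h
    have hψw : ψ.mulVec w = u := by
      funext i
      simp only [Matrix.mulVec, dotProduct]
      have : ∑ j, ψ i j * w j = u i * ∑ j, v j * w j := by
        rw [Finset.mul_sum]
        exact Finset.sum_congr rfl fun j _ => by rw [hψ]; ring
      rw [this, ← hfrep, hfv1, mul_one]
    have : δ₁.mulVec (φ.mulVec w) = u := by
      rw [← hψw, hφ, Matrix.add_mulVec, ← Matrix.mulVec_mulVec, ← Matrix.mulVec_mulVec, hw0]
      simp [Matrix.mulVec_zero]
    exact hu₂ ⟨φ.mulVec w, this⟩
  · -- weight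
    have hset : (Finset.univ.filter fun q : Fin M₁ × Fin M₂ => ψ q.1 q.2 ≠ 0)
        = (Finset.univ.filter fun i => u i ≠ 0) ×ˢ (Finset.univ.filter fun j => v j ≠ 0) := by
      ext ⟨i, j⟩
      simp only [Finset.mem_filter, Finset.mem_product, Finset.mem_univ, true_and, hψ,
        mul_ne_zero_iff]
    rw [mwt, hset, Finset.card_product, wt, wt]
end

section
/- Let δ₁ : Matrix (Fin M₁) (Fin M₁) (ZMod 2) and δ₂ : Matrix (Fin M₂) (Fin M₂) (ZMod 2) satisfy δ₁·δ₁ = 0 and δ₂·δ₂ = 0, and let d₁, d₂ be natural numbers. Assume that every u ∈ ker δ₁ not in the column space of δ₁ has wt(u) ≥ d₁, and every v ∈ ker δ₂ not in the column space of δ₂ has wt(v) ≥ d₂. Then every M₁×M₂ matrix ψ over ZMod 2 with δ₁·ψ + ψ·δ₂ᵀ = 0 that is not of the form δ₁·φ + φ·δ₂ᵀ satisfies wt(ψ) ≥ max(d₁, d₂). -/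
open Matrix

/-!
If ψ is a cycle of the product complex and some cycle `w` of `δ₂ᵀ` gives a column combination
`ψ w` outside the image of `δ₁`, then `ψ w` is a nontrivial cycle of `δ₁` of weight at most
`mwt ψ`, so `d₁ ≤ mwt ψ`. Otherwise ψ is a boundary: a generalized inverse `G` of `D = δ₂ᵀ`
(`D G D = D`) is a chain homotopy from the identity to `Q = 1 - G D - D G`, whose columns lie in
`ker D`, so `ψ Q` factors through `δ₁`. The bound `d₂` follows by transposing.
-/

theorem LinearMap.exists_comp_comp_eq_self {K V W : Type*} [DivisionRing K] [AddCommGroup V]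
    [Module K V] [AddCommGroup W] [Module K W] (f : V →ₗ[K] W) :
    ∃ g : W →ₗ[K] V, f ∘ₗ g ∘ₗ f = f := by
  obtain ⟨l, hl⟩ := (range f).subtype.exists_leftInverse_of_injective (Submodule.ker_subtype _)
  obtain ⟨r, hr⟩ := f.rangeRestrict.exists_rightInverse_of_surjective (range_rangeRestrict f)
  refine ⟨r ∘ₗ l, ?_⟩
  calc f ∘ₗ (r ∘ₗ l) ∘ₗ f
      = (range f).subtype ∘ₗ (f.rangeRestrict ∘ₗ r) ∘ₗ (l ∘ₗ (range f).subtype) ∘ₗ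
          f.rangeRestrict := rfl
    _ = f := by rw [hr, hl]; rfl

theorem Matrix.exists_mul_mul_eq_self {K m n : Type*} [Field K] [Fintype m] [DecidableEq m]
    [Fintype n] [DecidableEq n] (A : Matrix m n K) : ∃ G : Matrix n m K, A * G * A = A := by
  obtain ⟨g, hg⟩ := (toLin' A).exists_comp_comp_eq_self
  refine ⟨LinearMap.toMatrix' g, toLin'.injective ?_⟩
  simpa [toLin'_mul, LinearMap.comp_assoc] using hg

theorem Matrix.exists_mul_eq_of_forall_exists_mulVec_eq {R l m n : Type*}
    [NonUnitalNonAssocSemiring R] [Fintype m] {A : Matrix l m R} {B : Matrix l n R} (h : ∀ j, ∃ y, A *ᵥ y = B.col j) :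
    ∃ Y, A * Y = B := by
  choose y hy using h
  exact ⟨of fun k j => y j k, by ext i j; exact congrFun (hy j) i⟩

theorem Matrix.exists_eq_mul_add_mul_of_forall_ker {K m n : Type*} [Field K] [Fintype m]
    [DecidableEq m] [Fintype n] [DecidableEq n] {A : Matrix m m K} {D : Matrix n n K}
    (hD : D * D = 0) {ψ : Matrix m n K} (hψ : A * ψ = ψ * D)
    (hker : ∀ w, D *ᵥ w = 0 → ∃ x, A *ᵥ x = ψ *ᵥ w) :
    ∃ φ : Matrix m n K, ψ = A * φ + φ * D := by
  obtain ⟨G, hG⟩ := D.exists_mul_mul_eq_self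
  set Q := 1 - G * D - D * G with hQ
  have hDQ : D * Q = 0 := by simp [hQ, mul_sub, ← mul_assoc, hD, hG]
  have hQD : Q * D = 0 := by simp [hQ, sub_mul, mul_assoc, hD, hG]
  obtain ⟨Y, hY⟩ : ∃ Y : Matrix m n K, A * Y = ψ * Q :=
    exists_mul_eq_of_forall_exists_mulVec_eq fun j => by
      obtain ⟨x, hx⟩ := hker (Q.col j) <| by
        rw [← mulVec_single_one, mulVec_mulVec, hDQ, zero_mulVec]
      exact ⟨x, by rw [hx, ← mulVec_single_one, mulVec_mulVec, mulVec_single_one]⟩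
  have hAY : A * (Y * (1 - D * G)) = ψ * Q := by
    rw [← Matrix.mul_assoc, hY, Matrix.mul_sub, Matrix.mul_one, ← Matrix.mul_assoc,
      Matrix.mul_assoc ψ, hQD, Matrix.mul_zero, Matrix.zero_mul, sub_zero]
  have hYD : Y * (1 - D * G) * D = 0 := by
    rw [Matrix.mul_assoc, sub_mul, one_mul, hG, sub_self, Matrix.mul_zero]
  refine ⟨ψ * G + Y * (1 - D * G), ?_⟩
  rw [Matrix.mul_add, Matrix.add_mul, hAY, hYD, add_zero, ← Matrix.mul_assoc, hψ,
    Matrix.mul_assoc, Matrix.mul_assoc, ← Matrix.mul_add, ← Matrix.mul_add]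
  conv_lhs => rw [← Matrix.mul_one ψ]
  congr 1
  rw [hQ]
  abel

theorem wt_mulVec_le_mwt {m n : ℕ} (ψ : Matrix (Fin m) (Fin n) (ZMod 2)) (w : Fin n → ZMod 2) :
    wt (ψ *ᵥ w) ≤ mwt ψ := by
  classical
  calc wt (ψ *ᵥ w)
      ≤ ((Finset.univ.filter fun p : Fin m × Fin n => ψ p.1 p.2 ≠ 0).image Prod.fst).card := by
        refine Finset.card_le_card fun i hi => ?_
        have hi : ∑ j, ψ i j * w j ≠ 0 := (Finset.mem_filter.mp hi).2
        obtain ⟨j, -, hj⟩ := Finset.exists_ne_zero_of_sum_ne_zero hi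
        exact Finset.mem_image.mpr ⟨(i, j), by simpa using left_ne_zero_of_mul hj, rfl⟩
    _ ≤ mwt ψ := Finset.card_image_le

theorem mwt_transpose {m n : ℕ} (A : Matrix (Fin m) (Fin n) (ZMod 2)) : mwt Aᵀ = mwt A := by
  unfold mwt
  refine Finset.card_equiv (Equiv.prodComm _ _) fun p => ?_
  rw [Finset.mem_filter]
  simp

theorem Matrix.transpose_mul_add_mul_transpose {R l m : Type*} [CommSemiring R] [Fintype l]
    [Fintype m] (A : Matrix l l R) (B : Matrix m m R) (X : Matrix l m R) :
    (A * X + X * Bᵀ)ᵀ = B * Xᵀ + Xᵀ * Aᵀ := by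
  rw [transpose_add, transpose_mul, transpose_mul, transpose_transpose, add_comm]

theorem le_mwt_of_not_exists_eq_mul_add_mul {M₁ M₂ d₁ : ℕ}
    {δ₁ : Matrix (Fin M₁) (Fin M₁) (ZMod 2)} {δ₂ : Matrix (Fin M₂) (Fin M₂) (ZMod 2)}
    (h₂ : δ₂ * δ₂ = 0)
    (hd₁ : ∀ u : Fin M₁ → ZMod 2, δ₁ *ᵥ u = 0 → (¬ ∃ x, δ₁ *ᵥ x = u) → d₁ ≤ wt u)
    {ψ : Matrix (Fin M₁) (Fin M₂) (ZMod 2)} (hc : δ₁ * ψ + ψ * δ₂ᵀ = 0)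
    (hb : ¬ ∃ φ : Matrix (Fin M₁) (Fin M₂) (ZMod 2), ψ = δ₁ * φ + φ * δ₂ᵀ) :
    d₁ ≤ mwt ψ := by
  have hψ : δ₁ * ψ = ψ * δ₂ᵀ := by
    rw [eq_neg_of_add_eq_zero_left hc, ZModModule.neg_eq_self]
  have hD : δ₂ᵀ * δ₂ᵀ = 0 := by rw [← transpose_mul, h₂, transpose_zero]
  obtain ⟨w, hw, hnot⟩ : ∃ w, δ₂ᵀ *ᵥ w = 0 ∧ ¬ ∃ x, δ₁ *ᵥ x = ψ *ᵥ w := by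
    by_contra! h
    exact hb (exists_eq_mul_add_mul_of_forall_ker hD hψ h)
  have hcycle : δ₁ *ᵥ (ψ *ᵥ w) = 0 := by
    rw [mulVec_mulVec, hψ, ← mulVec_mulVec, hw, mulVec_zero]
  exact (hd₁ _ hcycle hnot).trans (wt_mulVec_le_mwt ψ w)

/-- Lower bound on the distance of the product: if every nontrivial cycle of `δₐ` has
weight at least `dₐ`, then every nontrivial cycle of the product boundary map
`∂ψ = δ₁ψ + ψδ₂ᵀ` has weight at least `max(d₁, d₂)`. -/
theorem product_cycle_lower_bound (M₁ M₂ d₁ d₂ : ℕ)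
    (δ₁ : Matrix (Fin M₁) (Fin M₁) (ZMod 2)) (δ₂ : Matrix (Fin M₂) (Fin M₂) (ZMod 2))
    (h₁ : δ₁ * δ₁ = 0) (h₂ : δ₂ * δ₂ = 0)
    (hd₁ : ∀ u : Fin M₁ → ZMod 2, δ₁.mulVec u = 0 →
      (¬ ∃ x : Fin M₁ → ZMod 2, δ₁.mulVec x = u) → d₁ ≤ wt u)
    (hd₂ : ∀ v : Fin M₂ → ZMod 2, δ₂.mulVec v = 0 →
      (¬ ∃ y : Fin M₂ → ZMod 2, δ₂.mulVec y = v) → d₂ ≤ wt v) :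
    ∀ ψ : Matrix (Fin M₁) (Fin M₂) (ZMod 2), δ₁ * ψ + ψ * δ₂ᵀ = 0 →
      (¬ ∃ φ : Matrix (Fin M₁) (Fin M₂) (ZMod 2), ψ = δ₁ * φ + φ * δ₂ᵀ) →
      max d₁ d₂ ≤ mwt ψ := by
  intro ψ hc hb
  refine max_le (le_mwt_of_not_exists_eq_mul_add_mul h₂ hd₁ hc hb) ?_
  rw [← mwt_transpose]
  refine le_mwt_of_not_exists_eq_mul_add_mul h₁ hd₂ ?_ fun ⟨φ, hφ⟩ => hb ⟨φᵀ, ?_⟩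
  · rw [← transpose_mul_add_mul_transpose, hc, transpose_zero]
  · rw [← transpose_transpose ψ, hφ, transpose_mul_add_mul_transpose]
end

section
/- Let δ : Matrix (Fin M) (Fin M) (ZMod 2) satisfy δ·δ = 0, let L = rank(δ) and H = M − 2L (so H ≥ 0 since im δ ⊆ ker δ). Let δ₀ be the M×M canonical boundary operator whose rows and columns are grouped into consecutive blocks of sizes H, L, L and whose only nonzero block is the identity in block position (2,3), i.e. (δ₀) i j = 1 if and only if H ≤ i < H + L and j = i + L. Then there exists an invertible matrix U ∈ Matrix (Fin M) (Fin M) (ZMod 2) such that δ = U·δ₀·U⁻¹. -/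
/-!
Since `δ² = 0`, the image of `δ` lies in its kernel. Pick a basis `r` of the image inside a
basis `(h, r)` of the kernel, and preimages `v` with `δ v = r`. Applying `δ` to a relation among
`h, r, v` kills the `h, r` part and leaves one among `r`, so `(h, r, v)` is independent; it has
`H + L + L = M` vectors, hence is a basis, and in it `δ` has matrix `δ₀`.
-/

open Matrix Module

theorem LinearMap.toMatrix_basis_reindex {R M ι κ : Type*} [CommRing R] [AddCommGroup M]
    [Module R M] [Fintype ι] [DecidableEq ι] [Fintype κ] [DecidableEq κ]
    (b : Basis ι R M) (e : ι ≃ κ) (f : M →ₗ[R] M) :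
    LinearMap.toMatrix (b.reindex e) (b.reindex e) f = reindex e e (LinearMap.toMatrix b b f) := by
  ext i j
  simp [LinearMap.toMatrix_apply]

theorem LinearIndependent.sum_elim_of_map {R M N ι κ : Type*} [Ring R] [AddCommGroup M]
    [Module R M] [AddCommGroup N] [Module R N] [Fintype ι] [Fintype κ] {f : M →ₗ[R] N}
    {u : ι → M} {v : κ → M} (hu : LinearIndependent R u) (hfu : ∀ i, f (u i) = 0)
    (hfv : LinearIndependent R (f ∘ v)) : LinearIndependent R (Sum.elim u v) := by
  rw [Fintype.linearIndependent_iff]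
  intro c hc
  rw [Fintype.sum_sum_type] at hc
  simp only [Sum.elim_inl, Sum.elim_inr] at hc
  have hv0 : ∀ k, c (.inr k) = 0 :=
    Fintype.linearIndependent_iff.mp hfv _ (by simpa [map_sum, hfu] using congrArg f hc)
  have hu0 : ∀ i, c (.inl i) = 0 :=
    Fintype.linearIndependent_iff.mp hu _ (by simpa [hv0] using hc)
  rintro (i | k)
  exacts [hu0 i, hv0 k]

theorem Submodule.exists_basis_sum_inr_mem {K V : Type*} [Field K] [AddCommGroup V] [Module K V]
    [FiniteDimensional K V] (p : Submodule K V) {H L : ℕ} (hp : finrank K p = L)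
    (hV : finrank K V = H + L) :
    ∃ b : Basis (Fin H ⊕ Fin L) K V, ∀ i, b (.inr i) ∈ p := by
  obtain ⟨W, hW⟩ := p.exists_isCompl
  have hWH : finrank K W = H := by
    have := Submodule.finrank_add_eq_of_isCompl hW
    omega
  refine ⟨((finBasisOfFinrankEq K W hWH).prod (finBasisOfFinrankEq K p hp)).map
    (Submodule.prodEquivOfIsCompl W p hW.symm), fun i => ?_⟩
  simp

theorem LinearMap.exists_basis_of_comp_self_eq_zero {K V : Type*} [Field K] [AddCommGroup V]
    [Module K V] [FiniteDimensional K V] (f : V →ₗ[K] V) (hf : f ∘ₗ f = 0) {H L : ℕ}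
    (hL : finrank K (range f) = L) (hH : finrank K (ker f) = H + L) :
    ∃ b : Basis ((Fin H ⊕ Fin L) ⊕ Fin L) K V,
      (∀ i, f (b (.inl i)) = 0) ∧ ∀ i, f (b (.inr i)) = b (.inl (.inr i)) := by
  have hRK : range f ≤ ker f := range_le_ker_iff.mpr hf
  have hR : finrank K ((range f).comap (ker f).subtype) = L :=
    hL ▸ (Submodule.comapSubtypeEquivOfLe hRK).finrank_eq
  obtain ⟨bK, hbK⟩ := ((range f).comap (ker f).subtype).exists_basis_sum_inr_mem hR hH
  choose v hv using fun i => hbK i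
  set u : Fin H ⊕ Fin L → V := (ker f).subtype ∘ bK
  have hu : LinearIndependent K u := bK.linearIndependent.map' _ (Submodule.ker_subtype _)
  have hfv : f ∘ v = u ∘ Sum.inr := funext hv
  have hli : LinearIndependent K (Sum.elim u v) :=
    hu.sum_elim_of_map (fun i => (bK i).2) (hfv ▸ hu.comp _ Sum.inr_injective)
  have hcard : Fintype.card ((Fin H ⊕ Fin L) ⊕ Fin L) = finrank K V := by
    simp only [Fintype.card_sum, Fintype.card_fin, ← finrank_range_add_finrank_ker f, hL, hH]
    ring
  refine ⟨basisOfLinearIndependentOfCardEqFinrank' _ hli hcard, fun i => ?_, fun i => ?_⟩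
  · simp [u]
  · simpa [u] using hv i

theorem LinearMap.toMatrix_eq_fromBlocks {R M : Type*} [CommRing R] [AddCommGroup M] [Module R M]
    {H L : ℕ} (f : M →ₗ[R] M) (b : Basis ((Fin H ⊕ Fin L) ⊕ Fin L) R M)
    (hb₀ : ∀ i, f (b (.inl i)) = 0) (hb₁ : ∀ i, f (b (.inr i)) = b (.inl (.inr i))) :
    LinearMap.toMatrix b b f = fromBlocks 0 (fromRows 0 1) 0 0 := by
  ext ((i | i) | i) (j | j) <;>
    simp [LinearMap.toMatrix_apply, hb₀, hb₁, Finsupp.single_apply, one_apply, eq_comm]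

def finBlockEquiv (H L : ℕ) : (Fin H ⊕ Fin L) ⊕ Fin L ≃ Fin (H + L + L) :=
  (finSumFinEquiv.sumCongr (Equiv.refl _)).trans finSumFinEquiv

def canonicalBoundary (R : Type*) [Zero R] [One R] (H L : ℕ) :
    Matrix (Fin (H + L + L)) (Fin (H + L + L)) R :=
  of fun i j => if H ≤ (i : ℕ) ∧ (i : ℕ) < H + L ∧ (j : ℕ) = i + L then 1 else 0

theorem reindex_finBlockEquiv_fromBlocks {R : Type*} [Zero R] [One R] (H L : ℕ) :
    reindex (finBlockEquiv H L) (finBlockEquiv H L)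
      (fromBlocks 0 (fromRows 0 1) 0 0 : Matrix ((Fin H ⊕ Fin L) ⊕ Fin L) _ R) =
      canonicalBoundary R H L := by
  ext i j
  obtain ⟨x, rfl⟩ := (finBlockEquiv H L).surjective i
  obtain ⟨y, rfl⟩ := (finBlockEquiv H L).surjective j
  rcases x with ((x | x) | x) <;> rcases y with ((y | y) | y) <;>
    simp [canonicalBoundary, finBlockEquiv, one_apply, Fin.ext_iff]
  all_goals first | (intro; omega) | (split_ifs <;> first | rfl | omega)

theorem Matrix.exists_isUnit_eq_mul_toMatrix_mul_inv {R n : Type*} [CommRing R] [Fintype n]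
    [DecidableEq n] (A : Matrix n n R) (b : Basis n R (n → R)) :
    ∃ U : Matrix n n R, IsUnit U ∧ A = U * LinearMap.toMatrix b b A.mulVecLin * U⁻¹ := by
  let e := Pi.basisFun R n
  have hU : e.toMatrix b * b.toMatrix e = 1 := e.toMatrix_mul_toMatrix_flip b
  refine ⟨e.toMatrix b, IsUnit.of_mul_eq_one _ hU, ?_⟩
  rw [inv_eq_right_inv hU, basis_toMatrix_mul_linearMap_toMatrix_mul_basis_toMatrix,
    LinearMap.toMatrix_eq_toMatrix']
  exact (LinearMap.toMatrix'_toLin' A).symm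

/-- Canonical form of a boundary operator: every `M×M` matrix `δ` over `ZMod 2` with
`δ² = 0`, rank `L` and homological dimension `H = M − 2L` is conjugate, by an invertible
matrix `U`, to the canonical boundary operator `δ₀` whose only nonzero block is the
`L×L` identity in block position `(2,3)` (blocks of sizes `H, L, L`). -/
theorem boundary_operator_canonical_form (M : ℕ)
    (δ : Matrix (Fin M) (Fin M) (ZMod 2)) (hδ : δ * δ = 0)
    (L H : ℕ) (hL : L = δ.rank) (hH : H = M - 2 * L)
    (δ₀ : Matrix (Fin M) (Fin M) (ZMod 2))
    (hδ₀ : ∀ i j : Fin M, δ₀ i j =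
      if H ≤ (i : ℕ) ∧ (i : ℕ) < H + L ∧ (j : ℕ) = (i : ℕ) + L then 1 else 0) :
    ∃ U : Matrix (Fin M) (Fin M) (ZMod 2), IsUnit U ∧ δ = U * δ₀ * U⁻¹ := by
  set f := δ.mulVecLin
  have hf : f ∘ₗ f = 0 := by rw [← mulVecLin_mul, hδ, mulVecLin_zero]
  have hrange : finrank (ZMod 2) (LinearMap.range f) = L := hL.symm
  have hLker : L ≤ finrank (ZMod 2) (LinearMap.ker f) :=
    hrange ▸ Submodule.finrank_mono (LinearMap.range_le_ker_iff.mpr hf)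
  have hrk : L + finrank (ZMod 2) (LinearMap.ker f) = M := by
    rw [← hrange, f.finrank_range_add_finrank_ker, finrank_fin_fun]
  have hker : finrank (ZMod 2) (LinearMap.ker f) = H + L := by omega
  obtain ⟨b, hb₀, hb₁⟩ := f.exists_basis_of_comp_self_eq_zero hf hrange hker
  obtain rfl : M = H + L + L := by omega
  obtain rfl : δ₀ = canonicalBoundary (ZMod 2) H L := by ext i j; exact hδ₀ i j
  obtain ⟨U, hU, hδU⟩ :=
    δ.exists_isUnit_eq_mul_toMatrix_mul_inv (b.reindex (finBlockEquiv H L))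
  rw [LinearMap.toMatrix_basis_reindex, f.toMatrix_eq_fromBlocks b hb₀ hb₁,
    reindex_finBlockEquiv_fromBlocks] at hδU
  exact ⟨U, hU, hδU⟩
end

section
/- For every ε > 0 there exist constants c > 0, ρ > 0, C > 0 and a natural number M₀ such that for all M ≥ M₀ and all natural numbers H ≤ ρ·M the following holds. Let B = {δ : Matrix (Fin M) (Fin M) (ZMod 2) | δ·δ = 0 ∧ M − 2·rank(δ) = H}. Then the number of δ ∈ B for which there exists a nonzero vector v : Fin M → ZMod 2 with δ·v = 0 and wt(v) < c·M is at most C · 2^((ε − 1/2)·M) · |B|. The same bound holds with δᵀ in place of δ (i.e., for kernels of transposes). -/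
open Matrix

/-
Conjugation `δ ↦ g δ g⁻¹` by invertible matrices preserves the ensemble `B` of boundary operators
and acts transitively on nonzero vectors, so every nonzero `v` lies in the kernel of the same
number of `δ ∈ B`. Double counting the pairs `(v, δ)` with `0 ≠ v ∈ ker δ`, where
`|ker δ| = 2 ^ ((M + H) / 2)` because `δ² = 0` forces `2 rank δ ≤ M`, bounds that number by
`|B| 2 ^ ((M + H) / 2) / (2 ^ M - 1) ≈ |B| 2 ^ ((H - M) / 2)`. A union bound over the at most
`exp (2 t M)` vectors of weight `< t² M` (compare each with `∑ v, t ^ wt v = (1 + t) ^ M`) then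
gives the estimate once `t` is small compared with `ε`; transposition permutes `B`, which gives
the estimate for `δᵀ`.
-/

open Finset

section ConjugationInvariant

variable {K : Type*} [Field K] {n : Type*} [Fintype n] [DecidableEq n]

theorem Matrix.exists_unit_mulVec_eq {v w : n → K} (hv : v ≠ 0) (hw : w ≠ 0) :
    ∃ g : (Matrix n n K)ˣ, (g : Matrix n n K) *ᵥ v = w := by
  obtain ⟨e, he⟩ := Submodule.exists_linearEquiv_restrict_eq
    ((LinearEquiv.toSpanNonzeroSingleton K _ v hv).symm ≪≫ₗ
      LinearEquiv.toSpanNonzeroSingleton K _ w hw)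
  have hev : e v = w := by
    have := he (LinearEquiv.toSpanNonzeroSingleton K _ v hv 1)
    rw [LinearEquiv.trans_apply, LinearEquiv.symm_apply_apply] at this
    simpa using this.symm
  obtain ⟨g, hg⟩ := LinearMap.isUnit_toMatrix'_iff.mpr
    (Module.End.isUnit_iff (e : (n → K) →ₗ[K] n → K) |>.mpr e.bijective)
  exact ⟨g, by rw [hg, LinearMap.toMatrix'_mulVec]; exact hev⟩

theorem Matrix.card_filter_mulVec_eq_zero [Fintype K] [DecidableEq K] {m : Type*} [Fintype m]
    (δ : Matrix m n K) : #{w | δ *ᵥ w = 0} = Fintype.card K ^ (Fintype.card n - δ.rank) := by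
  have hker : #{w | δ *ᵥ w = 0} = Nat.card (LinearMap.ker δ.mulVecLin) := by
    rw [← Fintype.card_subtype, ← Nat.card_eq_fintype_card]
    exact Nat.card_congr (Equiv.subtypeEquivRight fun w ↦ by simp)
  have hrank := LinearMap.finrank_range_add_finrank_ker δ.mulVecLin
  rw [Module.finrank_fintype_fun_eq_card] at hrank
  rw [hker, Module.natCard_eq_pow_finrank (K := K), Nat.card_eq_fintype_card, Matrix.rank]
  congr 1
  omega

variable [DecidableEq K] {S : Finset (Matrix n n K)}
  (hS : ∀ g : (Matrix n n K)ˣ, ∀ δ ∈ S, (g : Matrix n n K) * δ * (↑g⁻¹ : Matrix n n K) ∈ S)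
include hS

theorem card_filter_mulVec_eq_zero_eq {v w : n → K} (hv : v ≠ 0) (hw : w ≠ 0) :
    #{δ ∈ S | δ *ᵥ v = 0} = #{δ ∈ S | δ *ᵥ w = 0} := by
  obtain ⟨g, rfl⟩ := exists_unit_mulVec_eq hv hw
  refine card_nbij' (fun δ ↦ g * δ * (↑g⁻¹ : Matrix n n K))
    (fun δ ↦ (↑g⁻¹ : Matrix n n K) * δ * g) ?_ ?_ ?_ ?_
  · intro δ hδ
    simp only [coe_filter, Set.mem_ofPred_eq] at hδ ⊢
    refine ⟨hS g δ hδ.1, ?_⟩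
    rw [mulVec_mulVec, mul_assoc, Units.inv_mul, mul_one, ← mulVec_mulVec, hδ.2, mulVec_zero]
  · intro δ hδ
    simp only [coe_filter, Set.mem_ofPred_eq] at hδ ⊢
    refine ⟨by simpa using hS g⁻¹ δ hδ.1, ?_⟩
    rw [← mulVec_mulVec, ← mulVec_mulVec, hδ.2, mulVec_zero]
  · intro δ _
    simp [← mul_assoc]
  · intro δ _
    simp [← mul_assoc]

theorem card_sub_one_mul_card_filter_mulVec_eq_zero [Fintype K] {v : n → K} (hv : v ≠ 0) :
    (Fintype.card K ^ Fintype.card n - 1) * #{δ ∈ S | δ *ᵥ v = 0} =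
      ∑ δ ∈ S, (Fintype.card K ^ (Fintype.card n - δ.rank) - 1) := by
  calc (Fintype.card K ^ Fintype.card n - 1) * #{δ ∈ S | δ *ᵥ v = 0}
      = ∑ w ∈ {w : n → K | w ≠ 0}, #{δ ∈ S | δ *ᵥ w = 0} := by
        rw [sum_congr rfl fun w hw ↦ card_filter_mulVec_eq_zero_eq hS (mem_filter.mp hw).2 hv,
          sum_const, smul_eq_mul, filter_ne', card_erase_of_mem (mem_univ _), card_univ,
          Fintype.card_fun]
    _ = ∑ δ ∈ S, #{w : n → K | w ≠ 0 ∧ δ *ᵥ w = 0} := by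
        simp only [card_filter, sum_filter]
        rw [sum_comm]
        simp [ite_and]
    _ = ∑ δ ∈ S, (Fintype.card K ^ (Fintype.card n - δ.rank) - 1) := by
        refine sum_congr rfl fun δ _ ↦ ?_
        rw [← δ.card_filter_mulVec_eq_zero, ← card_erase_of_mem (a := 0) (by simp)]
        congr 1
        ext w
        simp [and_comm]

theorem card_sub_one_mul_card_filter_exists_mulVec_eq_zero_le [Fintype K]
    (p : (n → K) → Prop) [DecidablePred p] :
    (Fintype.card K ^ Fintype.card n - 1) * #{δ ∈ S | ∃ v, v ≠ 0 ∧ δ *ᵥ v = 0 ∧ p v} ≤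
      #{v | v ≠ 0 ∧ p v} * ∑ δ ∈ S, (Fintype.card K ^ (Fintype.card n - δ.rank) - 1) := by
  have hunion : #{δ ∈ S | ∃ v, v ≠ 0 ∧ δ *ᵥ v = 0 ∧ p v} ≤
      ∑ v ∈ {v | v ≠ 0 ∧ p v}, #{δ ∈ S | δ *ᵥ v = 0} := by
    refine (card_le_card fun δ hδ ↦ ?_).trans card_biUnion_le
    obtain ⟨hδS, v, hv, hδv, hpv⟩ := mem_filter.mp hδ
    exact mem_biUnion.mpr ⟨v, mem_filter.mpr ⟨mem_univ v, hv, hpv⟩, mem_filter.mpr ⟨hδS, hδv⟩⟩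
  calc _ ≤ (Fintype.card K ^ Fintype.card n - 1) *
          ∑ v ∈ {v | v ≠ 0 ∧ p v}, #{δ ∈ S | δ *ᵥ v = 0} :=
        Nat.mul_le_mul_left _ hunion
    _ = #{v | v ≠ 0 ∧ p v} * ∑ δ ∈ S, (Fintype.card K ^ (Fintype.card n - δ.rank) - 1) := by
        rw [mul_sum, sum_congr rfl fun v hv ↦
          card_sub_one_mul_card_filter_mulVec_eq_zero hS (mem_filter.mp hv).2.1,
          sum_const, smul_eq_mul]

end ConjugationInvariant

section BoundaryOperators

variable (K : Type*) [Field K] [Fintype K] [DecidableEq K]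
  (n : Type*) [Fintype n] [DecidableEq n]

noncomputable def boundaryOperators (H : ℕ) : Finset (Matrix n n K) :=
  {δ | δ * δ = 0 ∧ Fintype.card n - 2 * δ.rank = H}

variable {K n} {H : ℕ}

theorem conj_mem_boundaryOperators (g : (Matrix n n K)ˣ) {δ : Matrix n n K}
    (hδ : δ ∈ boundaryOperators K n H) :
    (g : Matrix n n K) * δ * (↑g⁻¹ : Matrix n n K) ∈ boundaryOperators K n H := by
  obtain ⟨hδδ, hrank⟩ := (mem_filter.mp hδ).2
  refine mem_filter.mpr ⟨mem_univ _, ?_, ?_⟩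
  · calc (g : Matrix n n K) * δ * ↑g⁻¹ * (g * δ * ↑g⁻¹) = g * (δ * δ) * ↑g⁻¹ := by
          simp only [mul_assoc, Units.inv_mul_cancel_left]
      _ = 0 := by rw [hδδ, mul_zero, zero_mul]
  · rwa [rank_mul_eq_left_of_isUnit_det _ _ (isUnits_det_units g⁻¹),
      rank_mul_eq_right_of_isUnit_det _ _ (isUnits_det_units g)]

theorem mem_boundaryOperators_fin {M : ℕ} {δ : Matrix (Fin M) (Fin M) K} :
    δ ∈ boundaryOperators K (Fin M) H ↔ δ * δ = 0 ∧ M - 2 * δ.rank = H := by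
  simp [boundaryOperators]

theorem transpose_mem_boundaryOperators {δ : Matrix n n K} :
    δᵀ ∈ boundaryOperators K n H ↔ δ ∈ boundaryOperators K n H := by
  simp only [boundaryOperators, mem_filter, mem_univ, true_and, ← transpose_mul,
    transpose_eq_zero, rank_transpose]

theorem card_boundaryOperators_filter_transpose (p : Matrix n n K → Prop) [DecidablePred p] :
    #{δ ∈ boundaryOperators K n H | p δᵀ} = #{δ ∈ boundaryOperators K n H | p δ} := by
  refine card_nbij' transpose transpose ?_ ?_ (fun δ _ ↦ transpose_transpose δ)
    (fun δ _ ↦ transpose_transpose δ)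
  all_goals
    intro δ hδ
    simp only [coe_filter, Set.mem_ofPred_eq, transpose_transpose] at hδ ⊢
    exact ⟨transpose_mem_boundaryOperators.mpr hδ.1, hδ.2⟩

theorem card_sub_rank_of_mem_boundaryOperators {δ : Matrix n n K}
    (hδ : δ ∈ boundaryOperators K n H) :
    Fintype.card n - δ.rank = (Fintype.card n + H) / 2 := by
  obtain ⟨hδδ, hrank⟩ := (mem_filter.mp hδ).2
  have := rank_add_rank_le_card_of_mul_eq_zero hδδ
  omega

theorem card_sub_one_mul_card_boundaryOperators_filter_le
    (p : (n → K) → Prop) [DecidablePred p] :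
    (Fintype.card K ^ Fintype.card n - 1) *
        #{δ ∈ boundaryOperators K n H | ∃ v, v ≠ 0 ∧ δ *ᵥ v = 0 ∧ p v} ≤
      #{v | v ≠ 0 ∧ p v} * #(boundaryOperators K n H) *
        Fintype.card K ^ ((Fintype.card n + H) / 2) := by
  refine (card_sub_one_mul_card_filter_exists_mulVec_eq_zero_le
    (fun g _ ↦ conj_mem_boundaryOperators g) p).trans ?_
  rw [mul_assoc, ← smul_eq_mul _ (Fintype.card K ^ _), ← sum_const]
  gcongr with δ hδ
  rw [card_sub_rank_of_mem_boundaryOperators hδ]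
  exact Nat.sub_le _ _

end BoundaryOperators

theorem sum_pow_wt {R : Type*} [CommSemiring R] (M : ℕ) (t : R) :
    ∑ v : Fin M → ZMod 2, t ^ wt v = (1 + t) ^ M := by
  have hprod : ∀ v : Fin M → ZMod 2, t ^ wt v = ∏ i, if v i ≠ 0 then t else 1 := fun v ↦ by
    rw [wt, ← prod_const, prod_filter]
  have hsum : ∑ a : ZMod 2, (if a ≠ 0 then t else 1) = 1 + t := by
    rw [show (univ : Finset (ZMod 2)) = {0, 1} from rfl, sum_pair zero_ne_one]
    simp
  simp_rw [hprod]
  rw [← Fintype.prod_sum (fun _ a ↦ if a ≠ 0 then t else 1), hsum, prod_const, card_univ,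
    Fintype.card_fin]

theorem card_filter_wt_lt_le_exp (M : ℕ) {t : ℝ} (ht0 : 0 < t) (ht1 : t ≤ 1) :
    (#{v : Fin M → ZMod 2 | (wt v : ℝ) < t ^ 2 * M} : ℝ) ≤ Real.exp (2 * t * M) := by
  set r : ℝ := t ^ 2 * M
  have hcount : #{v : Fin M → ZMod 2 | (wt v : ℝ) < r} * t ^ r ≤ (1 + t) ^ M := by
    calc #{v : Fin M → ZMod 2 | (wt v : ℝ) < r} * t ^ r
        = ∑ v ∈ {v : Fin M → ZMod 2 | (wt v : ℝ) < r}, t ^ r := by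
          rw [sum_const, nsmul_eq_mul]
      _ ≤ ∑ v ∈ {v : Fin M → ZMod 2 | (wt v : ℝ) < r}, t ^ wt v := by
          refine sum_le_sum fun v hv ↦ ?_
          rw [← Real.rpow_natCast]
          exact Real.rpow_le_rpow_of_exponent_ge ht0 ht1 (mem_filter.mp hv).2.le
      _ ≤ ∑ v : Fin M → ZMod 2, t ^ wt v :=
          sum_le_sum_of_subset_of_nonneg (filter_subset _ _) fun _ _ _ ↦ by positivity
      _ = (1 + t) ^ M := sum_pow_wt M t
  -- `t ^ (t ^ 2 * M) ≥ exp (-t M)` because `t log t ≥ t - 1 ≥ -1`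
  have hlow : Real.exp (-(t * M)) ≤ t ^ r := by
    rw [Real.rpow_def_of_pos ht0, Real.exp_le_exp]
    have := Real.one_sub_inv_le_log_of_pos ht0
    have : -1 ≤ t * Real.log t := by
      have := mul_le_mul_of_nonneg_left this ht0.le
      rw [mul_sub, mul_inv_cancel₀ ht0.ne', mul_one] at this
      linarith
    have hM : (0 : ℝ) ≤ t * M := by positivity
    nlinarith
  have hup : (1 + t) ^ M ≤ Real.exp (t * M) := by
    rw [mul_comm, Real.exp_nat_mul]
    exact pow_le_pow_left₀ (by positivity) (by linarith [Real.add_one_le_exp t]) M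
  calc (#{v : Fin M → ZMod 2 | (wt v : ℝ) < r} : ℝ)
      ≤ (1 + t) ^ M / t ^ r := by
        rw [le_div_iff₀ (Real.rpow_pos_of_pos ht0 r)]; exact hcount
    _ ≤ Real.exp (t * M) / Real.exp (-(t * M)) :=
        div_le_div₀ (by positivity) hup (by positivity) hlow
    _ = Real.exp (2 * t * M) := by rw [← Real.exp_sub]; ring_nf

theorem card_filter_ne_zero_wt_lt_le_two_rpow (M : ℕ) {ε t : ℝ} (ht0 : 0 < t) (ht1 : t ≤ 1)
    (ht : 4 * t ≤ ε * Real.log 2) :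
    (#{v : Fin M → ZMod 2 | v ≠ 0 ∧ (wt v : ℝ) < t ^ 2 * M} : ℝ) ≤ 2 ^ (ε / 2 * M) :=
  calc (#{v : Fin M → ZMod 2 | v ≠ 0 ∧ (wt v : ℝ) < t ^ 2 * M} : ℝ)
      ≤ #{v : Fin M → ZMod 2 | (wt v : ℝ) < t ^ 2 * M} := by
        exact_mod_cast card_le_card (monotone_filter_right _ fun _ _ (hv : _ ∧ _) ↦ hv.2)
    _ ≤ Real.exp (2 * t * M) := card_filter_wt_lt_le_exp M ht0 ht1
    _ ≤ 2 ^ (ε / 2 * M) := by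
        rw [Real.rpow_def_of_pos two_pos, Real.exp_le_exp]
        nlinarith [(Nat.cast_nonneg M : (0 : ℝ) ≤ M)]

theorem card_boundaryOperators_filter_low_weight_le {ε t : ℝ} (ht0 : 0 < t) (ht1 : t ≤ 1)
    (ht : 4 * t ≤ ε * Real.log 2) {M H : ℕ} (hM : 1 ≤ M) (hH : (H : ℝ) ≤ ε / 2 * M) :
    (#{δ ∈ boundaryOperators (ZMod 2) (Fin M) H |
        ∃ v, v ≠ 0 ∧ δ *ᵥ v = 0 ∧ (wt v : ℝ) < t ^ 2 * M} : ℝ) ≤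
      2 * 2 ^ ((ε - 1 / 2) * M) * #(boundaryOperators (ZMod 2) (Fin M) H) := by
  set bad := #{δ ∈ boundaryOperators (ZMod 2) (Fin M) H |
        ∃ v, v ≠ 0 ∧ δ *ᵥ v = 0 ∧ (wt v : ℝ) < t ^ 2 * M}
  set b := #(boundaryOperators (ZMod 2) (Fin M) H)
  set N := #{v : Fin M → ZMod 2 | v ≠ 0 ∧ (wt v : ℝ) < t ^ 2 * M}
  have hcount := card_sub_one_mul_card_boundaryOperators_filter_le (H := H)
    fun v : Fin M → ZMod 2 ↦ (wt v : ℝ) < t ^ 2 * M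
  rw [ZMod.card, Fintype.card_fin] at hcount
  have hcount' : ((2 : ℝ) ^ M - 1) * bad ≤ N * b * 2 ^ ((M + H) / 2) := by
    have : 1 ≤ 2 ^ M := Nat.one_le_two_pow
    exact_mod_cast hcount
  have hN : (N : ℝ) ≤ 2 ^ (ε / 2 * M) := card_filter_ne_zero_wt_lt_le_two_rpow M ht0 ht1 ht
  have hexp : (2 : ℝ) ^ (ε / 2 * M) * 2 ^ ((M + H) / 2) ≤ 2 ^ ((ε - 1 / 2) * M) * 2 ^ M := by
    calc (2 : ℝ) ^ (ε / 2 * M) * 2 ^ ((M + H) / 2)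
        ≤ 2 ^ (ε / 2 * M) * 2 ^ (((M : ℝ) + H) / 2) := by
          gcongr
          rw [← Real.rpow_natCast]
          exact Real.rpow_le_rpow_of_exponent_le one_le_two (by exact_mod_cast Nat.cast_div_le)
      _ ≤ 2 ^ ((ε - 1 / 2) * M) * 2 ^ M := by
          rw [← Real.rpow_natCast, ← Real.rpow_add two_pos, ← Real.rpow_add two_pos]
          exact Real.rpow_le_rpow_of_exponent_le one_le_two (by linarith)
  have hhalf : (2 : ℝ) ^ M / 2 ≤ 2 ^ M - 1 := by
    have : (2 : ℝ) ≤ 2 ^ M := le_self_pow₀ one_le_two (by omega)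
    linarith
  refine le_of_mul_le_mul_right ?_ (by positivity : (0 : ℝ) < 2 ^ M / 2)
  calc bad * ((2 : ℝ) ^ M / 2) ≤ ((2 : ℝ) ^ M - 1) * bad := by
        rw [mul_comm]; gcongr
    _ ≤ N * b * 2 ^ ((M + H) / 2) := hcount'
    _ ≤ 2 ^ (ε / 2 * M) * b * 2 ^ ((M + H) / 2) := by gcongr
    _ ≤ 2 ^ ((ε - 1 / 2) * M) * 2 ^ M * b := by
        rw [mul_right_comm]; gcongr
    _ = 2 * 2 ^ ((ε - 1 / 2) * M) * b * ((2 : ℝ) ^ M / 2) := by ring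

/-- For a uniformly random `M×M` boundary operator `δ` with homological dimension
`H ≤ ρM`, the probability that `ker δ` (or `ker δᵀ`) contains a nonzero vector of weight
less than `cM` is at most `O(1)·2^{(ε − 1/2)M}`, stated as a counting bound over the
ensemble `B = {δ : δ² = 0, M − 2 rank δ = H}`. -/
theorem random_boundary_operator_low_weight_kernel_bound :
    ∀ ε : ℝ, 0 < ε → ∃ c : ℝ, 0 < c ∧ ∃ ρ : ℝ, 0 < ρ ∧ ∃ C : ℝ, 0 < C ∧ ∃ M₀ : ℕ,
      ∀ M : ℕ, M₀ ≤ M → ∀ H : ℕ, (H : ℝ) ≤ ρ * M →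
        ((Nat.card {δ : Matrix (Fin M) (Fin M) (ZMod 2) //
            (δ * δ = 0 ∧ M - 2 * δ.rank = H) ∧
            ∃ v : Fin M → ZMod 2, v ≠ 0 ∧ δ.mulVec v = 0 ∧ (wt v : ℝ) < c * M} : ℝ) ≤
          C * (2 : ℝ) ^ ((ε - 1/2) * (M : ℝ)) *
            (Nat.card {δ : Matrix (Fin M) (Fin M) (ZMod 2) //
              δ * δ = 0 ∧ M - 2 * δ.rank = H} : ℝ)) ∧
        ((Nat.card {δ : Matrix (Fin M) (Fin M) (ZMod 2) //
            (δ * δ = 0 ∧ M - 2 * δ.rank = H) ∧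
            ∃ v : Fin M → ZMod 2, v ≠ 0 ∧ δᵀ.mulVec v = 0 ∧ (wt v : ℝ) < c * M} : ℝ) ≤
          C * (2 : ℝ) ^ ((ε - 1/2) * (M : ℝ)) *
            (Nat.card {δ : Matrix (Fin M) (Fin M) (ZMod 2) //
              δ * δ = 0 ∧ M - 2 * δ.rank = H} : ℝ)) := by
  intro ε hε
  set t := min 1 (ε * Real.log 2 / 4)
  have ht0 : 0 < t := lt_min one_pos (by positivity)
  have ht : 4 * t ≤ ε * Real.log 2 := by linarith [min_le_right 1 (ε * Real.log 2 / 4)]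
  refine ⟨t ^ 2, by positivity, ε / 2, by positivity, 2, two_pos, 1, fun M hM H hH ↦ ?_⟩
  have hbound := card_boundaryOperators_filter_low_weight_le ht0 (min_le_left _ _) ht hM hH
  simp only [Nat.card_eq_fintype_card, Fintype.card_subtype, ← mem_boundaryOperators_fin,
    ← filter_filter, filter_univ_mem]
  rw [card_boundaryOperators_filter_transpose
    fun δ ↦ ∃ v, v ≠ 0 ∧ δ *ᵥ v = 0 ∧ (wt v : ℝ) < t ^ 2 * M]
  exact ⟨hbound, hbound⟩
end

section
/- (Cleaning Lemma, CSS form.) Let δ : Matrix (Fin M) (Fin M) (ZMod 2) satisfy δ·δ = 0, and let S be a finite subset of Fin M. Assume that every vector v : Fin M → ZMod 2 with δ·v = 0 that is not in the column space of δ has wt(v) > |S|. Then for every h : Fin M → ZMod 2 with δᵀ·h = 0 there exists a vector ω in the column space of δᵀ such that (h + ω) i = 0 for all i ∈ S. -/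
open Matrix

open Module

variable {n : ℕ}

/-- dot-product pairing as map to dual -/
noncomputable def dotLin (n : ℕ) : (Fin n → ZMod 2) →ₗ[ZMod 2] Module.Dual (ZMod 2) (Fin n → ZMod 2) where
  toFun v := { toFun := fun w => v ⬝ᵥ w,
               map_add' := by intro a b; simp [dotProduct_add],
               map_smul' := by intro c a; simp [dotProduct_smul] }
  map_add' a b := by ext w; simp [add_dotProduct]
  map_smul' c a := by ext w; simp [smul_dotProduct]

lemma dotLin_inj : Function.Injective (dotLin n) := by
  rw [← LinearMap.ker_eq_bot, LinearMap.ker_eq_bot']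
  intro v hv
  funext i
  have := congrArg (fun f => f (Pi.single i 1)) hv
  simpa [dotLin, dotProduct_single] using this

noncomputable def dotEquiv (n : ℕ) : (Fin n → ZMod 2) ≃ₗ[ZMod 2] Module.Dual (ZMod 2) (Fin n → ZMod 2) :=
  LinearMap.linearEquivOfInjective (dotLin n) dotLin_inj (Subspace.dual_finrank_eq).symm

def perp (W : Submodule (ZMod 2) (Fin n → ZMod 2)) : Submodule (ZMod 2) (Fin n → ZMod 2) where
  carrier := {v | ∀ w ∈ W, w ⬝ᵥ v = 0}
  add_mem' := by intro a b ha hb w hw; simp [dotProduct_add, ha w hw, hb w hw]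
  zero_mem' := by intro w hw; simp
  smul_mem' := by intro c a ha w hw; simp [dotProduct_smul, ha w hw]

lemma mem_perp {W : Submodule (ZMod 2) (Fin n → ZMod 2)} {v} :
    v ∈ perp W ↔ ∀ w ∈ W, w ⬝ᵥ v = 0 := Iff.rfl

lemma perp_eq_comap (W : Submodule (ZMod 2) (Fin n → ZMod 2)) :
    perp W = W.dualAnnihilator.comap (dotEquiv n).toLinearMap := by
  ext v
  simp only [mem_perp, Submodule.mem_comap, Submodule.mem_dualAnnihilator]
  have key : ∀ w, (dotEquiv n v : Module.Dual (ZMod 2) (Fin n → ZMod 2)) w = v ⬝ᵥ w := by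
    intro w; simp [dotEquiv, LinearMap.linearEquivOfInjective, dotLin]
  constructor
  · intro h w hw; rw [LinearEquiv.coe_coe, key, dotProduct_comm]; exact h w hw
  · intro h w hw; rw [dotProduct_comm, ← key, ← LinearEquiv.coe_coe]; exact h w hw

lemma finrank_perp (W : Submodule (ZMod 2) (Fin n → ZMod 2)) :
    finrank (ZMod 2) (perp W) = n - finrank (ZMod 2) W := by
  have h1 : finrank (ZMod 2) (perp W) = finrank (ZMod 2) W.dualAnnihilator := by
    rw [perp_eq_comap]
    exact LinearEquiv.finrank_eq ((dotEquiv n).ofSubmodule' W.dualAnnihilator)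
  have h2 : Module.finrank (ZMod 2) ((Fin n → ZMod 2) ⧸ W) = Module.finrank (ZMod 2) W.dualAnnihilator :=
    LinearEquiv.finrank_eq (Subspace.quotEquivAnnihilator W)
  have h3 := Submodule.finrank_quotient_add_finrank W
  have h4 : finrank (ZMod 2) (Fin n → ZMod 2) = n := by simp
  omega

lemma le_perp_perp (W : Submodule (ZMod 2) (Fin n → ZMod 2)) : W ≤ perp (perp W) := by
  intro w hw v hv
  rw [dotProduct_comm]; exact hv w hw

lemma finrank_le_n (W : Submodule (ZMod 2) (Fin n → ZMod 2)) :
    finrank (ZMod 2) W ≤ n := by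
  have := Submodule.finrank_le W
  simpa using this

lemma perp_perp (W : Submodule (ZMod 2) (Fin n → ZMod 2)) : perp (perp W) = W := by
  refine (Submodule.eq_of_le_of_finrank_le (le_perp_perp W) ?_).symm
  rw [finrank_perp, finrank_perp]
  have := finrank_le_n W
  omega


/-- Cleaning Lemma (CSS form): if every `Z`-type logical operator (vector in
`ker δ \ im δ`) has weight greater than `|S|`, then every `X`-type undetectable error
(vector `h` with `δᵀh = 0`) can be cleaned off `S` by adding a product of `X`-type
stabilizers (a vector `ω = δᵀx` in `im δᵀ`). -/
theorem cleaning_lemma (M : ℕ) (δ : Matrix (Fin M) (Fin M) (ZMod 2)) (hδ : δ * δ = 0)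
    (S : Finset (Fin M))
    (hdist : ∀ v : Fin M → ZMod 2, δ.mulVec v = 0 →
      (¬ ∃ x : Fin M → ZMod 2, δ.mulVec x = v) → S.card < wt v) :
    ∀ h : Fin M → ZMod 2, δᵀ.mulVec h = 0 →
      ∃ x : Fin M → ZMod 2, ∀ i ∈ S, (h + δᵀ.mulVec x) i = 0 := by

  intro h hker
  -- the image of δᵀ
  set It : Submodule (ZMod 2) (Fin M → ZMod 2) := LinearMap.range δᵀ.mulVecLin with hIt
  -- vectors vanishing on S
  set C : Submodule (ZMod 2) (Fin M → ZMod 2) :=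
    { carrier := {g | ∀ i ∈ S, g i = 0}
      add_mem' := by intro a b ha hb i hi; simp [ha i hi, hb i hi]
      zero_mem' := by intro i hi; rfl
      smul_mem' := by intro c a ha i hi; simp [ha i hi] } with hC
  have hmem : h ∈ It ⊔ C := by
    rw [← perp_perp (It ⊔ C)]
    intro v hv
    -- v is orthogonal to It and to C
    have hvIt : ∀ w ∈ It, w ⬝ᵥ v = 0 := fun w hw => hv w (Submodule.mem_sup_left hw)
    have hvC : ∀ w ∈ C, w ⬝ᵥ v = 0 := fun w hw => hv w (Submodule.mem_sup_right hw)
    -- δ v = 0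
    have hker_v : δ.mulVec v = 0 := by
      funext j
      have := hvIt (δᵀ.mulVec (Pi.single j 1)) ⟨Pi.single j 1, rfl⟩
      rw [dotProduct_comm, dotProduct_mulVec, vecMul_transpose] at this
      simpa [dotProduct_single] using this
    -- v is supported on S
    have hsupp : ∀ i, i ∉ S → v i = 0 := by
      intro i hi
      have : Pi.single i 1 ∈ C := by
        intro j hj
        have : i ≠ j := fun e => hi (e ▸ hj)
        exact Pi.single_eq_of_ne this.symm 1
      have := hvC _ this
      simpa [dotProduct_single] using this
    -- so wt v ≤ |S|
    have hwt : wt v ≤ S.card := by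
      apply Finset.card_le_card
      intro i hi
      simp only [wt, Finset.mem_filter] at hi
      by_contra hiS
      exact hi.2 (hsupp i hiS)
    -- hence v is in the image of δ
    have hvI : ∃ x, δ.mulVec x = v := by
      by_contra hnot
      exact absurd (hdist v hker_v hnot) (by omega)
    obtain ⟨x, hx⟩ := hvI
    rw [dotProduct_comm, ← hx, dotProduct_mulVec, ← mulVec_transpose, hker, zero_dotProduct]
  obtain ⟨ω, hω, c, hc, hsum⟩ := Submodule.mem_sup.mp hmem
  obtain ⟨x, hx⟩ := hω
  rw [mulVecLin_apply] at hx
  refine ⟨x, fun i hi => ?_⟩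
  have hci : c i = 0 := hc i hi
  have : (h + δᵀ.mulVec x) i = (ω + c + ω) i := by rw [hx, hsum]
  rw [this]
  show ω i + c i + ω i = 0
  rw [hci, add_zero, CharTwo.add_self_eq_zero]
end

section
/- Let M' ≤ M and let δ : Matrix (Fin M) (Fin M) (ZMod 2) satisfy δ·δ = 0. Let res : (Fin M → ZMod 2) → (Fin M' → ZMod 2) be restriction to the first M' coordinates and ext : (Fin M' → ZMod 2) → (Fin M → ZMod 2) be extension by zero. Let S be the submodule {res(δ·v) | v : Fin M → ZMod 2 with res v = 0} of Fin M' → ZMod 2, let Q be the quotient module (Fin M' → ZMod 2) ⧸ S, and let π be the quotient map. Then there exists a unique linear map δ' : Q → Q such that δ'(π x) = π(res(δ·(ext x))) for every x : Fin M' → ZMod 2, and this δ' satisfies δ' ∘ δ' = 0. -/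
open Matrix

/-- The reduced boundary operator is well defined: there is a unique linear map `δ'` on
the quotient `Q = F₂^{M'} ⧸ S`, where `S = {res(δv) : res v = 0}`, satisfying
`δ'(π x) = π(res(δ·(ext x)))`, and it squares to zero. -/
theorem reduced_boundary_operator_well_defined (M M' : ℕ) (hM' : M' ≤ M)
    (δ : Matrix (Fin M) (Fin M) (ZMod 2)) (hδ : δ * δ = 0)
    (res : (Fin M → ZMod 2) → (Fin M' → ZMod 2))
    (hres : ∀ (v : Fin M → ZMod 2) (i : Fin M'), res v i = v (Fin.castLE hM' i))
    (ext : (Fin M' → ZMod 2) → (Fin M → ZMod 2))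
    (hext : ∀ (x : Fin M' → ZMod 2) (i : Fin M),
      ext x i = if h : (i : ℕ) < M' then x ⟨(i : ℕ), h⟩ else 0)
    (S : Submodule (ZMod 2) (Fin M' → ZMod 2))
    (hS : ∀ y : Fin M' → ZMod 2, y ∈ S ↔
      ∃ v : Fin M → ZMod 2, res v = 0 ∧ res (δ.mulVec v) = y) :
    (∃! δ' : ((Fin M' → ZMod 2) ⧸ S) →ₗ[ZMod 2] ((Fin M' → ZMod 2) ⧸ S),
      ∀ x : Fin M' → ZMod 2, δ' (S.mkQ x) = S.mkQ (res (δ.mulVec (ext x)))) ∧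
    (∀ δ' : ((Fin M' → ZMod 2) ⧸ S) →ₗ[ZMod 2] ((Fin M' → ZMod 2) ⧸ S),
      (∀ x : Fin M' → ZMod 2, δ' (S.mkQ x) = S.mkQ (res (δ.mulVec (ext x)))) →
      δ' ∘ₗ δ' = 0) := by
  -- res and ext are additive / linear
  have hres_add : ∀ u v : Fin M → ZMod 2, res (u + v) = res u + res v := by
    intro u v; funext i; simp [hres]
  have hres_smul : ∀ (c : ZMod 2) (v : Fin M → ZMod 2), res (c • v) = c • res v := by
    intro c v; funext i; simp [hres]
  have hext_add : ∀ x y : Fin M' → ZMod 2, ext (x + y) = ext x + ext y := by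
    intro x y; funext i
    simp only [hext, Pi.add_apply]
    split <;> simp
  have hext_smul : ∀ (c : ZMod 2) (x : Fin M' → ZMod 2), ext (c • x) = c • ext x := by
    intro c x; funext i
    simp only [hext, Pi.smul_apply]
    split <;> simp
  have hres_ext : ∀ (x : Fin M' → ZMod 2) (i : Fin M'), ext x (Fin.castLE hM' i) = x i := by
    intro x i
    rw [hext]
    simp [i.isLt]
  -- the linear map F : x ↦ res (δ · ext x)
  set F : (Fin M' → ZMod 2) →ₗ[ZMod 2] (Fin M' → ZMod 2) :=
    { toFun := fun x => res (δ.mulVec (ext x))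
      map_add' := by intro x y; show res (δ.mulVec (ext (x+y))) = res (δ.mulVec (ext x)) + res (δ.mulVec (ext y)); rw [hext_add, Matrix.mulVec_add, hres_add]
      map_smul' := by intro c x; show res (δ.mulVec (ext (c • x))) = c • res (δ.mulVec (ext x)); rw [hext_smul, Matrix.mulVec_smul, hres_smul] }
    with hF
  have hFx : ∀ x, F x = res (δ.mulVec (ext x)) := fun _ => rfl
  -- key lemma
  have key : ∀ u : Fin M → ZMod 2, F (res (δ.mulVec u)) ∈ S := by
    intro u
    rw [hS]
    refine ⟨ext (res (δ.mulVec u)) + δ.mulVec u, ?_, ?_⟩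
    · funext i
      rw [hres]
      simp only [Pi.add_apply]
      rw [hres_ext]
      rw [hres (δ.mulVec u) i] -- express
      exact CharTwo.add_self_eq_zero _
    · rw [Matrix.mulVec_add, Matrix.mulVec_mulVec, hδ, Matrix.zero_mulVec, add_zero]
      rfl
  have hker : S ≤ LinearMap.ker (S.mkQ ∘ₗ F) := by
    intro y hy
    rw [hS] at hy
    obtain ⟨v, _, rfl⟩ := hy
    simp only [LinearMap.mem_ker, LinearMap.comp_apply, Submodule.mkQ_apply,
      Submodule.Quotient.mk_eq_zero]
    exact key v
  set D : ((Fin M' → ZMod 2) ⧸ S) →ₗ[ZMod 2] ((Fin M' → ZMod 2) ⧸ S) :=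
    S.liftQ (S.mkQ ∘ₗ F) hker with hD
  have hDprop : ∀ x : Fin M' → ZMod 2, D (S.mkQ x) = S.mkQ (res (δ.mulVec (ext x))) := by
    intro x
    rw [hD, Submodule.mkQ_apply, Submodule.liftQ_apply]
    rfl
  have main : ∀ δ' : ((Fin M' → ZMod 2) ⧸ S) →ₗ[ZMod 2] ((Fin M' → ZMod 2) ⧸ S),
      (∀ x : Fin M' → ZMod 2, δ' (S.mkQ x) = S.mkQ (res (δ.mulVec (ext x)))) →
      δ' ∘ₗ δ' = 0 := by
    intro δ' h
    apply LinearMap.ext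
    intro q
    obtain ⟨x, rfl⟩ := S.mkQ_surjective q
    rw [LinearMap.comp_apply, h, h]
    simp only [LinearMap.zero_apply]
    rw [Submodule.mkQ_apply, Submodule.Quotient.mk_eq_zero]
    exact key (ext x)
  refine ⟨⟨D, hDprop, ?_⟩, main⟩
  intro E hE
  apply LinearMap.ext
  intro q
  obtain ⟨x, rfl⟩ := S.mkQ_surjective q
  rw [hE, hDprop]
end

section
/- Let M' ≤ M and let δ : Matrix (Fin M) (Fin M) (ZMod 2) satisfy δ·δ = 0. Assume δ is good: the only vector v with δ·v = 0 whose first M' coordinates all vanish is v = 0. With S, Q, π as in the construction of the reduced boundary operator, and δ' : Q → Q the unique linear map with δ'(π x) = π(res(δ·(ext x))), the following hold: finrank(S) = M − M'; finrank(Q) = 2M' − M; finrank(ker δ') = (M − rank δ) − (M − M'); and finrank(range δ') = rank(δ) − (M − M'). -/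
/-!
Let `W` be the vectors supported on the discarded coordinates, i.e. the kernel of the
restriction `res`. Goodness says `res` is injective on `ker δ`, and since `δ² = 0` also
`res ∘ δ` is injective on `W`; hence `dim S = dim W = M - M'`. The kernel of the reduced
operator is the image of `ker δ` in `V' = F^{M'}/S`, and `S ⊆ res (ker δ)`, so
`dim ker δ' = dim ker δ - dim S`. The remaining two formulas are rank–nullity.
-/

open Matrix LinearMap Module

namespace Submodule

variable {F V U : Type*} [DivisionRing F] [AddCommGroup V] [Module F V]
  [AddCommGroup U] [Module F U]

theorem finrank_map_eq_of_disjoint_ker {p : Submodule F V} {f : V →ₗ[F] U}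
    (h : Disjoint p (ker f)) : finrank F (p.map f) = finrank F p := by
  rw [← range_domRestrict]
  exact finrank_range_of_inj (injective_domRestrict_iff.mpr h)

theorem finrank_map_mkQ_add_finrank_of_le {S T : Submodule F U} [FiniteDimensional F T]
    (h : S ≤ T) : finrank F (T.map S.mkQ) + finrank F S = finrank F T := by
  have := (S.mkQ.domRestrict T).finrank_range_add_finrank_ker
  rwa [range_domRestrict, ker_domRestrict, ker_mkQ,
    (comapSubtypeEquivOfLe h).finrank_eq] at this

end Submodule

namespace ReducedBoundary

variable {F V U : Type*} [DivisionRing F] [AddCommGroup V] [Module F V]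
  [AddCommGroup U] [Module F U] {d : V →ₗ[F] V} {r : V →ₗ[F] U}

/-- The paper's `S = res (δ W)`, where `W = ker r` consists of the vectors supported on the
discarded coordinates. -/
def reducingSubmodule (d : V →ₗ[F] V) (r : V →ₗ[F] U) : Submodule F U :=
  (ker r).map (r ∘ₗ d)

theorem disjoint_ker_comp (hd : d ∘ₗ d = 0) (hgood : Disjoint (ker d) (ker r)) :
    Disjoint (ker r) (ker (r ∘ₗ d)) := by
  refine disjoint_ker.mpr fun w hw hrdw ↦ ?_
  have hdw : d w = 0 := disjoint_ker.mp hgood (d w) (range_le_ker_iff.mpr hd ⟨w, rfl⟩) hrdw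
  exact disjoint_ker.mp hgood w hdw hw

theorem finrank_reducingSubmodule (hd : d ∘ₗ d = 0) (hgood : Disjoint (ker d) (ker r)) :
    finrank F (reducingSubmodule d r) = finrank F (ker r) :=
  Submodule.finrank_map_eq_of_disjoint_ker (disjoint_ker_comp hd hgood)

theorem reducingSubmodule_le_map_ker (hd : d ∘ₗ d = 0) :
    reducingSubmodule d r ≤ (ker d).map r := by
  rintro _ ⟨w, -, rfl⟩
  exact ⟨d w, range_le_ker_iff.mpr hd ⟨w, rfl⟩, rfl⟩

theorem mkQ_apply_comp_eq_of_apply_eq {v w : V} (h : r v = r w) :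
    (reducingSubmodule d r).mkQ (r (d v)) = (reducingSubmodule d r).mkQ (r (d w)) := by
  rw [Submodule.mkQ_apply, Submodule.mkQ_apply, Submodule.Quotient.eq, ← map_sub, ← map_sub]
  exact ⟨v - w, sub_mem_ker_iff.mpr h, rfl⟩

variable {δ' : (U ⧸ reducingSubmodule d r) →ₗ[F] U ⧸ reducingSubmodule d r}

theorem ker_eq_map_mkQ (hd : d ∘ₗ d = 0) (hgood : Disjoint (ker d) (ker r))
    (hr : Function.Surjective r)
    (hδ' : ∀ v, δ' ((reducingSubmodule d r).mkQ (r v)) = (reducingSubmodule d r).mkQ (r (d v))) :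
    ker δ' = ((ker d).map r).map (reducingSubmodule d r).mkQ := by
  ext q
  constructor
  · intro hq
    obtain ⟨v, rfl⟩ := ((reducingSubmodule d r).mkQ_surjective.comp hr) q
    rw [Function.comp_apply, mem_ker, hδ', Submodule.mkQ_apply,
      Submodule.Quotient.mk_eq_zero] at hq
    obtain ⟨w, hw, hdw⟩ := hq
    have hcycle : v - w ∈ ker d := by
      refine mem_ker.mpr (disjoint_ker.mp hgood _ (range_le_ker_iff.mpr hd ⟨v - w, rfl⟩) ?_)
      rw [map_sub, map_sub, ← hdw, LinearMap.comp_apply, sub_self]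
    refine ⟨r (v - w), ⟨v - w, hcycle, rfl⟩, ?_⟩
    rw [map_sub, mem_ker.mp hw, sub_zero, Function.comp_apply]
  · rintro ⟨_, ⟨v, hv, rfl⟩, rfl⟩
    rw [mem_ker, hδ', mem_ker.mp hv, map_zero, map_zero]

theorem finrank_ker_add_finrank_reducingSubmodule [FiniteDimensional F V]
    (hd : d ∘ₗ d = 0) (hgood : Disjoint (ker d) (ker r)) (hr : Function.Surjective r)
    (hδ' : ∀ v, δ' ((reducingSubmodule d r).mkQ (r v)) = (reducingSubmodule d r).mkQ (r (d v))) :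
    finrank F (ker δ') + finrank F (reducingSubmodule d r) = finrank F (ker d) := by
  rw [ker_eq_map_mkQ hd hgood hr hδ',
    Submodule.finrank_map_mkQ_add_finrank_of_le (reducingSubmodule_le_map_ker hd),
    Submodule.finrank_map_eq_of_disjoint_ker hgood]

end ReducedBoundary

open ReducedBoundary

/-- Dimensions associated with the reduced boundary operator of a good boundary
operator: `dim S = M − M'`, `dim Q = 2M' − M`, `dim ker δ' = dim ker δ − (M − M')`, and
`dim im δ' = rank δ − (M − M')`. -/
theorem reduced_boundary_operator_dimensions (M M' : ℕ) (hM' : M' ≤ M)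
    (δ : Matrix (Fin M) (Fin M) (ZMod 2)) (hδ : δ * δ = 0)
    (hgood : ∀ v : Fin M → ZMod 2, δ.mulVec v = 0 →
      (∀ i : Fin M', v (Fin.castLE hM' i) = 0) → v = 0)
    (res : (Fin M → ZMod 2) → (Fin M' → ZMod 2))
    (hres : ∀ (v : Fin M → ZMod 2) (i : Fin M'), res v i = v (Fin.castLE hM' i))
    (ext : (Fin M' → ZMod 2) → (Fin M → ZMod 2))
    (hext : ∀ (x : Fin M' → ZMod 2) (i : Fin M),
      ext x i = if h : (i : ℕ) < M' then x ⟨(i : ℕ), h⟩ else 0)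
    (S : Submodule (ZMod 2) (Fin M' → ZMod 2))
    (hS : ∀ y : Fin M' → ZMod 2, y ∈ S ↔
      ∃ v : Fin M → ZMod 2, res v = 0 ∧ res (δ.mulVec v) = y)
    (δ' : ((Fin M' → ZMod 2) ⧸ S) →ₗ[ZMod 2] ((Fin M' → ZMod 2) ⧸ S))
    (hδ' : ∀ x : Fin M' → ZMod 2, δ' (S.mkQ x) = S.mkQ (res (δ.mulVec (ext x)))) :
    Module.finrank (ZMod 2) S = M - M' ∧
    Module.finrank (ZMod 2) ((Fin M' → ZMod 2) ⧸ S) = 2 * M' - M ∧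
    Module.finrank (ZMod 2) (LinearMap.ker δ') = (M - δ.rank) - (M - M') ∧
    Module.finrank (ZMod 2) (LinearMap.range δ') = δ.rank - (M - M') := by
  set r := funLeft (ZMod 2) (ZMod 2) (Fin.castLE hM')
  have hres_r : res = r := funext fun v ↦ funext (hres v)
  subst hres_r
  have hr : Function.Surjective r :=
    funLeft_surjective_of_injective _ _ _ (Fin.castLE_injective hM')
  have hd : δ.mulVecLin ∘ₗ δ.mulVecLin = 0 := by rw [← mulVecLin_mul, hδ, mulVecLin_zero]
  have hgood' : Disjoint (ker δ.mulVecLin) (ker r) :=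
    disjoint_ker.mpr fun v hv hrv ↦ hgood v hv fun i ↦ congrFun hrv i
  obtain rfl : S = reducingSubmodule δ.mulVecLin r := by
    ext y; simp [hS, reducingSubmodule]
  have hr_ext : ∀ x, r (ext x) = x := fun x ↦ funext fun i ↦ by simp [r, hext]
  have hδ'r : ∀ v, δ' ((reducingSubmodule δ.mulVecLin r).mkQ (r v)) =
      (reducingSubmodule δ.mulVecLin r).mkQ (r (δ.mulVecLin v)) := fun v ↦ by
    rw [hδ', ← mulVecLin_apply]
    exact mkQ_apply_comp_eq_of_apply_eq (hr_ext _)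
  have hker_r := finrank_range_add_finrank_ker r
  rw [range_eq_top.mpr hr, finrank_top] at hker_r
  have hker_δ := finrank_range_add_finrank_ker δ.mulVecLin
  have hS_dim := finrank_reducingSubmodule hd hgood'
  have hQ_dim := (reducingSubmodule δ.mulVecLin r).finrank_quotient_add_finrank
  have hker_δ' := finrank_ker_add_finrank_reducingSubmodule hd hgood' hr hδ'r
  have hrange_δ' := finrank_range_add_finrank_ker δ'
  simp only [finrank_pi, Fintype.card_fin] at hker_r hker_δ hQ_dim
  rw [Matrix.rank]
  omega
end

section
/- Fix M, M' ≤ M, L, H with M = 2L + H. Let (δ₁, δ₂) and (δ₁', δ₂') be two pairs of good boundary operators (M×M matrices over ZMod 2 with square zero), each of rank L. Then for every natural number R, the number of M'×M' matrices over ZMod 2 of rank R that are reduced cycles for (δ₁, δ₂) equals the number of M'×M' matrices of rank R that are reduced cycles for (δ₁', δ₂'). -/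
/-!
A square-zero operator `f` becomes, in the coordinates `(u₁, u₂, c) ↦ u₁ + f u₂ + c` given by a
complement `U` of `ker f` and a complement `C` of `range f` inside `ker f`, the shift
`(u₁, u₂, c) ↦ (0, u₁, 0)`. Goodness says that the subspace `W` of vectors vanishing on the first
`M'` coordinates meets `ker δ` trivially, so `U` can be chosen to contain `W`; hence two good
boundary operators of the same rank are conjugate by an automorphism fixing `W` pointwise. Its
matrix `A` is block lower triangular, so `g ↦ A g Bᵀ` maps cycles of `(δ₁, δ₂)` to cycles of
`(δ₁', δ₂')` and acts on top-left blocks as `h ↦ A₀ h B₀ᵀ` with `A₀`, `B₀` invertible: a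
rank-preserving injection between the two sets of reduced cycles, and by symmetry a bijection.
-/

open Matrix LinearMap Module Submodule

section SquareZero

variable {K V : Type*} [Field K] [AddCommGroup V] [Module K V]

theorem Submodule.exists_linearEquiv_fixing_of_le [FiniteDimensional K V]
    {W U U' : Submodule K V} (hU : W ≤ U) (hU' : W ≤ U') (h : finrank K U = finrank K U') :
    ∃ e : U ≃ₗ[K] U', ∀ x : U, (x : V) ∈ W → (e x : V) = x := by
  obtain ⟨X, hX⟩ := exists_isCompl (W.comap U.subtype)
  obtain ⟨X', hX'⟩ := exists_isCompl (W.comap U'.subtype)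
  have hXX' : finrank K X = finrank K X' := by
    have := finrank_add_eq_of_isCompl hX
    have := finrank_add_eq_of_isCompl hX'
    have := (comapSubtypeEquivOfLe hU).finrank_eq
    have := (comapSubtypeEquivOfLe hU').finrank_eq
    omega
  let eW := (comapSubtypeEquivOfLe hU).trans (comapSubtypeEquivOfLe hU').symm
  refine ⟨(prodEquivOfIsCompl _ _ hX).symm ≪≫ₗ eW.prodCongr (LinearEquiv.ofFinrankEq _ _ hXX') ≪≫ₗ
    prodEquivOfIsCompl _ _ hX', fun x hx => ?_⟩
  have := prodEquivOfIsCompl_symm_apply_left _ _ hX ⟨x, hx⟩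
  simp [this, eW]

theorem exists_prod_linearEquiv_of_comp_self_eq_zero {f : V →ₗ[K] V} (hf : f ∘ₗ f = 0)
    {U : Submodule K V} (hU : IsCompl (ker f) U) :
    ∃ (C : Submodule K V) (Φ : (U × U × C) ≃ₗ[K] V),
      (∀ x, Φ x = x.1 + f x.2.1 + x.2.2) ∧ ∀ x, f (Φ x) = Φ (0, x.1, 0) := by
  have hff (v : V) : f (f v) = 0 := LinearMap.congr_fun hf v
  obtain ⟨C, hRC, hsup⟩ := IsModularLattice.exists_disjoint_and_sup_eq (range_le_ker_iff.mpr hf)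
  have hCK : C ≤ ker f := hsup ▸ le_sup_right
  let Φ := U.subtype.coprod ((f ∘ₗ U.subtype).coprod C.subtype)
  have hΦ (x : U × U × C) : Φ x = x.1 + f x.2.1 + x.2.2 := by simp [Φ, add_assoc]
  have hinj : Function.Injective Φ := by
    refine injective_iff_map_eq_zero _ |>.mpr fun ⟨u₁, u₂, c⟩ h => ?_
    rw [hΦ] at h
    have hu₁ : (u₁ : V) = 0 := by
      refine disjoint_def.mp hU.disjoint _ ?_ u₁.2
      simpa [hff, mem_ker.mp (hCK c.2)] using congrArg f h
    have hc : (c : V) = 0 := by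
      refine disjoint_def.mp hRC _ ?_ c.2
      rw [hu₁, zero_add, add_eq_zero_iff_eq_neg'] at h
      exact h ▸ neg_mem (mem_range_self f _)
    have hu₂ : (u₂ : V) = 0 :=
      disjoint_def.mp hU.disjoint _ (by simpa [hu₁, hc] using h) u₂.2
    simp [Subtype.ext_iff, hu₁, hu₂, hc]
  have hsurj : Function.Surjective Φ := by
    intro v
    obtain ⟨k, hk, u₁, hu₁, rfl⟩ := mem_sup.mp (hU.sup_eq_top ▸ mem_top : v ∈ ker f ⊔ U)
    obtain ⟨_, ⟨y, rfl⟩, c, hc, rfl⟩ := mem_sup.mp (hsup ▸ hk : k ∈ range f ⊔ C)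
    obtain ⟨k', hk', u₂, hu₂, rfl⟩ := mem_sup.mp (hU.sup_eq_top ▸ mem_top : y ∈ ker f ⊔ U)
    refine ⟨(⟨u₁, hu₁⟩, ⟨u₂, hu₂⟩, ⟨c, hc⟩), ?_⟩
    rw [hΦ]
    simp only [map_add, mem_ker.mp hk']
    abel
  have hfΦ (x : U × U × C) : f (Φ x) = Φ (0, x.1, 0) := by
    simp [hΦ, hff, mem_ker.mp (hCK x.2.2.2)]
  exact ⟨C, LinearEquiv.ofBijective Φ ⟨hinj, hsurj⟩, hΦ, hfΦ⟩

theorem exists_linearEquiv_conj_of_comp_self_eq_zero [FiniteDimensional K V] {f f' : V →ₗ[K] V}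
    (hf : f ∘ₗ f = 0) (hf' : f' ∘ₗ f' = 0) (hr : finrank K (range f) = finrank K (range f'))
    {W : Submodule K V} (hW : Disjoint (ker f) W) (hW' : Disjoint (ker f') W) :
    ∃ e : V ≃ₗ[K] V, (∀ v, f' (e v) = e (f v)) ∧ ∀ w ∈ W, e w = w := by
  obtain ⟨U, hWU, hU⟩ := hW.symm.exists_isCompl
  obtain ⟨U', hWU', hU'⟩ := hW'.symm.exists_isCompl
  obtain ⟨C, Φ, hΦ, hfΦ⟩ := exists_prod_linearEquiv_of_comp_self_eq_zero hf hU.symm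
  obtain ⟨C', Φ', hΦ', hfΦ'⟩ := exists_prod_linearEquiv_of_comp_self_eq_zero hf' hU'.symm
  have hUU' : finrank K U = finrank K U' := by
    have := finrank_range_add_finrank_ker f
    have := finrank_range_add_finrank_ker f'
    have := finrank_add_eq_of_isCompl hU
    have := finrank_add_eq_of_isCompl hU'
    omega
  have hCC' : finrank K C = finrank K C' := by
    have hC := Φ.finrank_eq
    have hC' := Φ'.finrank_eq
    simp only [finrank_prod] at hC hC'
    omega
  obtain ⟨eU, heU⟩ := exists_linearEquiv_fixing_of_le hWU hWU' hUU'
  refine ⟨Φ.symm ≪≫ₗ eU.prodCongr (eU.prodCongr (LinearEquiv.ofFinrankEq C C' hCC')) ≪≫ₗ Φ',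
    fun v => ?_, fun w hw => ?_⟩
  · obtain ⟨x, rfl⟩ := Φ.surjective v
    simp [hfΦ, hfΦ']
  · have : Φ.symm w = (⟨w, hWU hw⟩, 0, 0) := Φ.symm_apply_eq.mpr (by simp [hΦ])
    simp [this, hΦ', heU ⟨w, hWU hw⟩ hw]

end SquareZero

theorem Matrix.exists_conj_of_mul_self_eq_zero {K m n : Type*} [Field K] [Fintype n]
    [DecidableEq n] {ι : m → n} {δ δ' : Matrix n n K} (hδ : δ * δ = 0) (hδ' : δ' * δ' = 0)
    (hr : δ.rank = δ'.rank)
    (hg : ∀ v : n → K, δ *ᵥ v = 0 → (∀ i, v (ι i) = 0) → v = 0)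
    (hg' : ∀ v : n → K, δ' *ᵥ v = 0 → (∀ i, v (ι i) = 0) → v = 0) :
    ∃ A : Matrix n n K, δ' * A = A * δ ∧ (∀ i, ∀ k ∉ Set.range ι, A (ι i) k = 0) ∧
      IsUnit A.det := by
  let W := ker (funLeft K K ι)
  have hW (v : n → K) : v ∈ W ↔ ∀ i, v (ι i) = 0 := by simp [W, funext_iff]
  have hdisj {δ : Matrix n n K} (hg : ∀ v : n → K, δ *ᵥ v = 0 → (∀ i, v (ι i) = 0) → v = 0) :
      Disjoint (ker δ.mulVecLin) W :=
    disjoint_def.mpr fun v hv hvW => hg v hv ((hW v).mp hvW)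
  have hsq {δ : Matrix n n K} (hδ : δ * δ = 0) : δ.mulVecLin ∘ₗ δ.mulVecLin = 0 := by
    rw [← mulVecLin_mul, hδ, mulVecLin_zero]
  obtain ⟨e, he, heW⟩ :=
    exists_linearEquiv_conj_of_comp_self_eq_zero (hsq hδ) (hsq hδ') hr (hdisj hg) (hdisj hg')
  refine ⟨LinearMap.toMatrix' e, ?_, fun i k hk => ?_, ?_⟩
  · have : δ'.mulVecLin ∘ₗ e = e ∘ₗ δ.mulVecLin := LinearMap.ext he
    simpa [LinearMap.toMatrix'_comp, ← Matrix.toLin'_apply'] using congrArg LinearMap.toMatrix' this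
  · have hkW : Pi.single k 1 ∈ W := (hW _).mpr fun i' => Pi.single_eq_of_ne (fun h => hk ⟨i', h⟩) _
    rw [LinearMap.toMatrix'_apply, LinearEquiv.coe_coe, heW _ hkW]
    exact Pi.single_eq_of_ne (fun h => hk ⟨i, h⟩) _
  · rw [LinearMap.det_toMatrix']
    exact e.isUnit_det'

namespace Matrix

variable {R m n : Type*} [Fintype m] [Fintype n] {ι : m → n}

theorem submatrix_mul_of_apply_eq_zero [NonUnitalNonAssocSemiring R] (hι : Function.Injective ι)
    {A : Matrix n n R} (hA : ∀ i, ∀ k ∉ Set.range ι, A (ι i) k = 0) (X : Matrix n n R) :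
    (A * X).submatrix ι ι = A.submatrix ι ι * X.submatrix ι ι := by
  ext i j
  exact (Fintype.sum_of_injective ι hι _ _ (fun k hk => by simp [hA i k hk]) fun _ => rfl).symm

theorem submatrix_mul_transpose_of_apply_eq_zero [CommSemiring R] (hι : Function.Injective ι)
    {B : Matrix n n R} (hB : ∀ i, ∀ k ∉ Set.range ι, B (ι i) k = 0) (X : Matrix n n R) :
    (X * Bᵀ).submatrix ι ι = X.submatrix ι ι * (B.submatrix ι ι)ᵀ := by
  rw [← transpose_transpose (X * Bᵀ), transpose_mul, transpose_transpose, ← transpose_submatrix,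
    submatrix_mul_of_apply_eq_zero hι hB, transpose_mul, transpose_submatrix, transpose_transpose]

theorem isUnit_det_submatrix_of_apply_eq_zero [CommRing R] [DecidableEq m] [DecidableEq n]
    (hι : Function.Injective ι) {A : Matrix n n R} (hA : ∀ i, ∀ k ∉ Set.range ι, A (ι i) k = 0)
    (hdet : IsUnit A.det) : IsUnit (A.submatrix ι ι).det :=
  isUnit_det_of_right_inverse (B := A⁻¹.submatrix ι ι) <| by
    rw [← submatrix_mul_of_apply_eq_zero hι hA, mul_nonsing_inv _ hdet, submatrix_one _ hι]

end Matrix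

section ReducedCycles

variable {R m n : Type*} [Fintype m] [Fintype n] (ι : m → n)

def IsReducedCycle [CommSemiring R] (δ₁ δ₂ : Matrix n n R) (h : Matrix m m R) : Prop :=
  ∃ g : Matrix n n R, δ₁ * g + g * δ₂ᵀ = 0 ∧ ∀ i j, g (ι i) (ι j) = h i j

variable {ι}

theorem IsReducedCycle.conj [CommSemiring R] (hι : Function.Injective ι)
    {δ₁ δ₂ δ₁' δ₂' A B : Matrix n n R} (hAδ : δ₁' * A = A * δ₁) (hBδ : δ₂' * B = B * δ₂)
    (hA : ∀ i, ∀ k ∉ Set.range ι, A (ι i) k = 0) (hB : ∀ i, ∀ k ∉ Set.range ι, B (ι i) k = 0)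
    {h : Matrix m m R} (hh : IsReducedCycle ι δ₁ δ₂ h) :
    IsReducedCycle ι δ₁' δ₂' (A.submatrix ι ι * h * (B.submatrix ι ι)ᵀ) := by
  obtain ⟨g, hg, hgh⟩ := hh
  have hBδ' : Bᵀ * δ₂'ᵀ = δ₂ᵀ * Bᵀ := by rw [← transpose_mul, hBδ, transpose_mul]
  refine ⟨A * g * Bᵀ, ?_, fun i j => ?_⟩
  · calc δ₁' * (A * g * Bᵀ) + A * g * Bᵀ * δ₂'ᵀ
        = δ₁' * A * g * Bᵀ + A * g * (Bᵀ * δ₂'ᵀ) := by simp only [Matrix.mul_assoc]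
      _ = A * (δ₁ * g + g * δ₂ᵀ) * Bᵀ := by
        rw [hAδ, hBδ']; simp only [Matrix.mul_add, Matrix.add_mul, Matrix.mul_assoc]
      _ = 0 := by rw [hg, Matrix.mul_zero, Matrix.zero_mul]
  · have hblock : (A * g * Bᵀ).submatrix ι ι = A.submatrix ι ι * h * (B.submatrix ι ι)ᵀ := by
      rw [Matrix.mul_assoc, submatrix_mul_of_apply_eq_zero hι hA,
        submatrix_mul_transpose_of_apply_eq_zero hι hB,
        show g.submatrix ι ι = h from Matrix.ext hgh, Matrix.mul_assoc]
    exact congrFun (congrFun hblock i) j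

theorem card_reducedCycles_rank_le [CommRing R] [Finite R] [DecidableEq m] [DecidableEq n]
    (hι : Function.Injective ι)
    {δ₁ δ₂ δ₁' δ₂' A B : Matrix n n R} (hAδ : δ₁' * A = A * δ₁) (hBδ : δ₂' * B = B * δ₂)
    (hA : ∀ i, ∀ k ∉ Set.range ι, A (ι i) k = 0) (hB : ∀ i, ∀ k ∉ Set.range ι, B (ι i) k = 0)
    (hAdet : IsUnit A.det) (hBdet : IsUnit B.det) (r : ℕ) :
    Nat.card {h : Matrix m m R // h.rank = r ∧ IsReducedCycle ι δ₁ δ₂ h} ≤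
      Nat.card {h : Matrix m m R // h.rank = r ∧ IsReducedCycle ι δ₁' δ₂' h} := by
  have hA₀ := isUnit_det_submatrix_of_apply_eq_zero hι hA hAdet
  have hB₀ : IsUnit (B.submatrix ι ι)ᵀ.det := by
    rw [Matrix.det_transpose]; exact isUnit_det_submatrix_of_apply_eq_zero hι hB hBdet
  have hrank (h : Matrix m m R) : (A.submatrix ι ι * h * (B.submatrix ι ι)ᵀ).rank = h.rank := by
    rw [rank_mul_eq_left_of_isUnit_det _ _ hB₀, rank_mul_eq_right_of_isUnit_det _ _ hA₀]
  refine Nat.card_le_card_of_injective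
    (fun h => ⟨_, (hrank h).trans h.2.1, h.2.2.conj hι hAδ hBδ hA hB⟩) fun h h' hhh' => ?_
  have := congrArg Subtype.val hhh'
  exact Subtype.ext <| ((Matrix.isUnit_iff_isUnit_det _).mpr hA₀).mul_left_cancel <|
    ((Matrix.isUnit_iff_isUnit_det _).mpr hB₀).mul_right_cancel this

end ReducedCycles

theorem reduced_cycle_count_independent_general (M M' L : ℕ) (hM' : M' ≤ M)
    (δ₁ δ₂ δ₁' δ₂' : Matrix (Fin M) (Fin M) (ZMod 2))
    (h₁ : δ₁ * δ₁ = 0) (h₂ : δ₂ * δ₂ = 0) (h₁' : δ₁' * δ₁' = 0) (h₂' : δ₂' * δ₂' = 0)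
    (hr₁ : δ₁.rank = L) (hr₂ : δ₂.rank = L) (hr₁' : δ₁'.rank = L) (hr₂' : δ₂'.rank = L)
    (hg₁ : ∀ v : Fin M → ZMod 2, δ₁.mulVec v = 0 →
      (∀ i : Fin M', v (Fin.castLE hM' i) = 0) → v = 0)
    (hg₂ : ∀ v : Fin M → ZMod 2, δ₂.mulVec v = 0 →
      (∀ i : Fin M', v (Fin.castLE hM' i) = 0) → v = 0)
    (hg₁' : ∀ v : Fin M → ZMod 2, δ₁'.mulVec v = 0 →
      (∀ i : Fin M', v (Fin.castLE hM' i) = 0) → v = 0)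
    (hg₂' : ∀ v : Fin M → ZMod 2, δ₂'.mulVec v = 0 →
      (∀ i : Fin M', v (Fin.castLE hM' i) = 0) → v = 0)
    (R : ℕ) :
    Nat.card {h : Matrix (Fin M') (Fin M') (ZMod 2) // h.rank = R ∧
      ∃ g : Matrix (Fin M) (Fin M) (ZMod 2), δ₁ * g + g * δ₂ᵀ = 0 ∧
        ∀ i j : Fin M', g (Fin.castLE hM' i) (Fin.castLE hM' j) = h i j} =
    Nat.card {h : Matrix (Fin M') (Fin M') (ZMod 2) // h.rank = R ∧
      ∃ g : Matrix (Fin M) (Fin M) (ZMod 2), δ₁' * g + g * δ₂'ᵀ = 0 ∧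
        ∀ i j : Fin M', g (Fin.castLE hM' i) (Fin.castLE hM' j) = h i j} := by
  have hι := Fin.castLE_injective hM'
  obtain ⟨A, hAδ, hA, hAdet⟩ :=
    exists_conj_of_mul_self_eq_zero h₁ h₁' (hr₁.trans hr₁'.symm) hg₁ hg₁'
  obtain ⟨B, hBδ, hB, hBdet⟩ :=
    exists_conj_of_mul_self_eq_zero h₂ h₂' (hr₂.trans hr₂'.symm) hg₂ hg₂'
  obtain ⟨A', hAδ', hA', hAdet'⟩ :=
    exists_conj_of_mul_self_eq_zero h₁' h₁ (hr₁'.trans hr₁.symm) hg₁' hg₁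
  obtain ⟨B', hBδ', hB', hBdet'⟩ :=
    exists_conj_of_mul_self_eq_zero h₂' h₂ (hr₂'.trans hr₂.symm) hg₂' hg₂
  exact le_antisymm (card_reducedCycles_rank_le hι hAδ hBδ hA hB hAdet hBdet R)
    (card_reducedCycles_rank_le hι hAδ' hBδ' hA' hB' hAdet' hBdet' R)

/-- The number of rank-`R` reduced cycles is the same for every pair of good boundary
operators of rank `L` (with `M = 2L + H`). -/
theorem reduced_cycle_count_independent (M M' L H : ℕ) (hM' : M' ≤ M)
    (hM : M = 2 * L + H)
    (δ₁ δ₂ δ₁' δ₂' : Matrix (Fin M) (Fin M) (ZMod 2))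
    (h₁ : δ₁ * δ₁ = 0) (h₂ : δ₂ * δ₂ = 0) (h₁' : δ₁' * δ₁' = 0) (h₂' : δ₂' * δ₂' = 0)
    (hr₁ : δ₁.rank = L) (hr₂ : δ₂.rank = L) (hr₁' : δ₁'.rank = L) (hr₂' : δ₂'.rank = L)
    (hg₁ : ∀ v : Fin M → ZMod 2, δ₁.mulVec v = 0 →
      (∀ i : Fin M', v (Fin.castLE hM' i) = 0) → v = 0)
    (hg₂ : ∀ v : Fin M → ZMod 2, δ₂.mulVec v = 0 →
      (∀ i : Fin M', v (Fin.castLE hM' i) = 0) → v = 0)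
    (hg₁' : ∀ v : Fin M → ZMod 2, δ₁'.mulVec v = 0 →
      (∀ i : Fin M', v (Fin.castLE hM' i) = 0) → v = 0)
    (hg₂' : ∀ v : Fin M → ZMod 2, δ₂'.mulVec v = 0 →
      (∀ i : Fin M', v (Fin.castLE hM' i) = 0) → v = 0)
    (R : ℕ) :
    Nat.card {h : Matrix (Fin M') (Fin M') (ZMod 2) // h.rank = R ∧
      ∃ g : Matrix (Fin M) (Fin M) (ZMod 2), δ₁ * g + g * δ₂ᵀ = 0 ∧
        ∀ i j : Fin M', g (Fin.castLE hM' i) (Fin.castLE hM' j) = h i j} =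
    Nat.card {h : Matrix (Fin M') (Fin M') (ZMod 2) // h.rank = R ∧
      ∃ g : Matrix (Fin M) (Fin M) (ZMod 2), δ₁' * g + g * δ₂'ᵀ = 0 ∧
        ∀ i j : Fin M', g (Fin.castLE hM' i) (Fin.castLE hM' j) = h i j} :=
  reduced_cycle_count_independent_general M M' L hM' δ₁ δ₂ δ₁' δ₂' h₁ h₂ h₁' h₂' hr₁ hr₂ hr₁' hr₂'
    hg₁ hg₂ hg₁' hg₂' R
end

section
/- Let a ≤ A be natural numbers and let r, R be natural numbers. Let X, X' : Matrix (Fin a) (Fin a) (ZMod 2) with rank(X) = r and rank(X') = r. Then the number of matrices Y : Matrix (Fin A) (Fin A) (ZMod 2) with rank(Y) = R such that Y (Fin.castLE i) (Fin.castLE j) = X i j for all i, j : Fin a equals the number of matrices Y with rank(Y) = R such that Y (Fin.castLE i) (Fin.castLE j) = X' i j for all i, j : Fin a. That is, the number E_{a,r}^{A,R} of rank-R extensions of a rank-r a×a matrix is well defined, depending only on a, r, A, R. -/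
open Matrix


namespace ExtAux

variable {a : ℕ}

lemma zmod2_eq_one {x : ZMod 2} (h : x ≠ 0) : x = 1 := by revert h; revert x; decide

/-- Every `a×a` matrix over `F₂` is `P⁻¹ * canonical * Q⁻¹`-equivalent to the canonical
rank form. -/
lemma exists_unit_mul (X : Matrix (Fin a) (Fin a) (ZMod 2)) :
    ∃ P Q : Matrix (Fin a) (Fin a) (ZMod 2), IsUnit P.det ∧ IsUnit Q.det ∧
      P * X * Q = Matrix.diagonal (fun i : Fin a => if (i : ℕ) < X.rank then 1 else 0) := by
  classical
  obtain ⟨L, L', d, h⟩ := Matrix.Pivot.exists_list_transvec_mul_mul_list_transvec_eq_diagonal X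
  set P₀ := (L.map Matrix.TransvectionStruct.toMatrix).prod
  set Q₀ := (L'.map Matrix.TransvectionStruct.toMatrix).prod
  have hP₀ : IsUnit P₀.det := by simp [P₀]
  have hQ₀ : IsUnit Q₀.det := by simp [Q₀]
  set r := X.rank with hr
  have hrd : Fintype.card {i // d i ≠ 0} = r := by
    rw [← Matrix.rank_diagonal d, ← h]
    rw [Matrix.rank_mul_eq_left_of_isUnit_det _ _ hQ₀,
      Matrix.rank_mul_eq_right_of_isUnit_det _ _ hP₀]
  have hra : r ≤ a := by simpa using X.rank_le_width
  -- build the permutation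
  have hcard1 : Fintype.card {i : Fin a // (i : ℕ) < r} = r := by
    have eq1 : {i : Fin a // (i : ℕ) < r} ≃ Fin r :=
      ⟨fun x => ⟨(x.1 : ℕ), x.2⟩, fun j => ⟨⟨(j : ℕ), lt_of_lt_of_le j.2 hra⟩, j.2⟩,
        fun x => by ext; rfl, fun j => by ext; rfl⟩
    rw [Fintype.card_congr eq1, Fintype.card_fin]
  have hcard2 : Fintype.card {i : Fin a // ¬ ((i : ℕ) < r)} =
      Fintype.card {i : Fin a // ¬ d i ≠ 0} := by
    rw [Fintype.card_subtype_compl, Fintype.card_subtype_compl, hrd, hcard1]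
  set e : {i : Fin a // (i : ℕ) < r} ≃ {i : Fin a // d i ≠ 0} :=
    Fintype.equivOfCardEq (by rw [hcard1, hrd])
  set f : {i : Fin a // ¬ ((i : ℕ) < r)} ≃ {i : Fin a // ¬ d i ≠ 0} :=
    Fintype.equivOfCardEq hcard2
  set σ : Equiv.Perm (Fin a) := Equiv.subtypeCongr e f
  have key : ∀ i : Fin a, d (σ i) ≠ 0 ↔ (i : ℕ) < r := by
    intro i
    by_cases hi : (i : ℕ) < r
    · have : σ i = (e ⟨i, hi⟩ : Fin a) := by
        simp [σ, Equiv.subtypeCongr, hi]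
      rw [this]
      exact iff_of_true (e ⟨i, hi⟩).2 hi
    · have : σ i = (f ⟨i, hi⟩ : Fin a) := by
        simp [σ, Equiv.subtypeCongr, hi]
      rw [this]
      exact iff_of_false (f ⟨i, hi⟩).2 hi
  have hdσ : (fun i : Fin a => d (σ i)) = fun i : Fin a => if (i : ℕ) < r then 1 else 0 := by
    funext i
    by_cases hi : (i : ℕ) < r
    · simp only [hi, if_true]
      exact zmod2_eq_one ((key i).mpr hi)
    · simp only [hi, if_false]
      have := (key i).not.mpr hi
      simpa using (not_not.mp (fun hc => hi ((key i).mp hc)))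
  refine ⟨σ.permMatrix (ZMod 2) * P₀, Q₀ * Equiv.Perm.permMatrix (ZMod 2) σ.symm, ?_, ?_, ?_⟩
  · rw [Matrix.det_mul]
    refine (?_ : IsUnit _).mul hP₀
    rcases Int.units_eq_one_or (Equiv.Perm.sign σ) with hs | hs <;>
      simp [Matrix.det_permutation, hs]
  · rw [Matrix.det_mul]
    refine hQ₀.mul ?_
    rcases Int.units_eq_one_or (Equiv.Perm.sign σ.symm) with hs | hs <;>
      simp [Matrix.det_permutation, hs]
  · have : σ.permMatrix (ZMod 2) * P₀ * X * (Q₀ * Equiv.Perm.permMatrix (ZMod 2) σ.symm) =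
        σ.permMatrix (ZMod 2) * (P₀ * X * Q₀) * Equiv.Perm.permMatrix (ZMod 2) σ.symm := by
      noncomm_ring
    rw [this, h, Equiv.Perm.permMatrix, Equiv.Perm.permMatrix,
      PEquiv.toMatrix_toPEquiv_mul, PEquiv.mul_toMatrix_toPEquiv]
    ext i j
    rw [Matrix.submatrix_apply, Matrix.submatrix_apply]
    simp only [id_eq, Equiv.symm_symm]
    rw [Matrix.diagonal_apply, Matrix.diagonal_apply, ← congrFun hdσ i]
    by_cases hij : i = j
    · subst hij; simp
    · rw [if_neg hij, if_neg (fun hc => hij (σ.injective hc))]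



lemma exists_unit_rel {X X' : Matrix (Fin a) (Fin a) (ZMod 2)} (h : X.rank = X'.rank) :
    ∃ P Q : Matrix (Fin a) (Fin a) (ZMod 2),
      IsUnit P.det ∧ IsUnit Q.det ∧ P * X * Q = X' := by
  obtain ⟨P, Q, hP, hQ, hPQ⟩ := exists_unit_mul X
  obtain ⟨P', Q', hP', hQ', hPQ'⟩ := exists_unit_mul X'
  rw [← h] at hPQ'
  refine ⟨P'⁻¹ * P, Q * Q'⁻¹, ?_, ?_, ?_⟩
  · rw [Matrix.det_mul]; exact (Matrix.isUnit_nonsing_inv_det P' hP').mul hP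
  · rw [Matrix.det_mul]; exact hQ.mul (Matrix.isUnit_nonsing_inv_det Q' hQ')
  · have : P'⁻¹ * P * X * (Q * Q'⁻¹) = P'⁻¹ * (P * X * Q) * Q'⁻¹ := by noncomm_ring
    rw [this, hPQ, ← hPQ']
    have : P'⁻¹ * (P' * X' * Q') * Q'⁻¹ = (P'⁻¹ * P') * X' * (Q' * Q'⁻¹) := by noncomm_ring
    rw [this, Matrix.nonsing_inv_mul _ hP', Matrix.mul_nonsing_inv _ hQ', Matrix.one_mul,
      Matrix.mul_one]

lemma block_entry {b : ℕ} (P Q : Matrix (Fin a) (Fin a) (ZMod 2))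
    (Z : Matrix (Fin a ⊕ Fin b) (Fin a ⊕ Fin b) (ZMod 2)) (i j : Fin a) :
    (Matrix.fromBlocks P 0 0 (1 : Matrix (Fin b) (Fin b) (ZMod 2)) * Z *
        Matrix.fromBlocks Q 0 0 (1 : Matrix (Fin b) (Fin b) (ZMod 2))) (Sum.inl i) (Sum.inl j)
      = (P * Z.toBlocks₁₁ * Q) i j := by
  conv_lhs => rw [← Matrix.fromBlocks_toBlocks Z]
  rw [Matrix.fromBlocks_multiply, Matrix.fromBlocks_multiply]
  simp [Matrix.fromBlocks]

lemma card_cond_eq (b R : ℕ) (P Q X : Matrix (Fin a) (Fin a) (ZMod 2))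
    (hP : IsUnit P.det) (hQ : IsUnit Q.det) :
    Nat.card {Z : Matrix (Fin a ⊕ Fin b) (Fin a ⊕ Fin b) (ZMod 2) //
        Z.rank = R ∧ ∀ i j : Fin a, Z (Sum.inl i) (Sum.inl j) = X i j} =
      Nat.card {Z : Matrix (Fin a ⊕ Fin b) (Fin a ⊕ Fin b) (ZMod 2) //
        Z.rank = R ∧ ∀ i j : Fin a, Z (Sum.inl i) (Sum.inl j) = (P * X * Q) i j} := by
  classical
  apply Nat.card_congr
  set Ph := Matrix.fromBlocks P 0 0 (1 : Matrix (Fin b) (Fin b) (ZMod 2)) with hPh_def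
  set Qh := Matrix.fromBlocks Q 0 0 (1 : Matrix (Fin b) (Fin b) (ZMod 2)) with hQh_def
  set Ph' := Matrix.fromBlocks P⁻¹ 0 0 (1 : Matrix (Fin b) (Fin b) (ZMod 2)) with hPh'_def
  set Qh' := Matrix.fromBlocks Q⁻¹ 0 0 (1 : Matrix (Fin b) (Fin b) (ZMod 2)) with hQh'_def
  have hPhdet : IsUnit Ph.det := by
    rw [hPh_def, Matrix.det_fromBlocks_zero₂₁]; simpa using hP
  have hQhdet : IsUnit Qh.det := by
    rw [hQh_def, Matrix.det_fromBlocks_zero₂₁]; simpa using hQ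
  have hPh'det : IsUnit Ph'.det := by
    rw [hPh'_def, Matrix.det_fromBlocks_zero₂₁]
    simpa using Matrix.isUnit_nonsing_inv_det P hP
  have hQh'det : IsUnit Qh'.det := by
    rw [hQh'_def, Matrix.det_fromBlocks_zero₂₁]
    simpa using Matrix.isUnit_nonsing_inv_det Q hQ
  have hPP : Ph' * Ph = 1 := by
    rw [hPh_def, hPh'_def, Matrix.fromBlocks_multiply]
    simp [Matrix.nonsing_inv_mul _ hP, Matrix.fromBlocks_one]
  have hPP' : Ph * Ph' = 1 := by
    rw [hPh_def, hPh'_def, Matrix.fromBlocks_multiply]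
    simp [Matrix.mul_nonsing_inv _ hP, Matrix.fromBlocks_one]
  have hQQ : Qh * Qh' = 1 := by
    rw [hQh_def, hQh'_def, Matrix.fromBlocks_multiply]
    simp [Matrix.mul_nonsing_inv _ hQ, Matrix.fromBlocks_one]
  have hQQ' : Qh' * Qh = 1 := by
    rw [hQh_def, hQh'_def, Matrix.fromBlocks_multiply]
    simp [Matrix.nonsing_inv_mul _ hQ, Matrix.fromBlocks_one]
  refine
    { toFun := fun Z => ⟨Ph * Z.1 * Qh, ?_, ?_⟩
      invFun := fun W => ⟨Ph' * W.1 * Qh', ?_, ?_⟩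
      left_inv := ?_
      right_inv := ?_ }
  · rw [Matrix.rank_mul_eq_left_of_isUnit_det _ _ hQhdet,
      Matrix.rank_mul_eq_right_of_isUnit_det _ _ hPhdet]
    exact Z.2.1
  · intro i j
    have h11 : Z.1.toBlocks₁₁ = X := by
      ext i j; exact Z.2.2 i j
    rw [block_entry, h11]
  · rw [Matrix.rank_mul_eq_left_of_isUnit_det _ _ hQh'det,
      Matrix.rank_mul_eq_right_of_isUnit_det _ _ hPh'det]
    exact W.2.1
  · intro i j
    have h11 : W.1.toBlocks₁₁ = P * X * Q := by
      ext i j; exact W.2.2 i j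
    rw [block_entry, h11]
    have : P⁻¹ * (P * X * Q) * Q⁻¹ = (P⁻¹ * P) * X * (Q * Q⁻¹) := by noncomm_ring
    rw [this, Matrix.nonsing_inv_mul _ hP, Matrix.mul_nonsing_inv _ hQ, Matrix.one_mul,
      Matrix.mul_one]
  · rintro ⟨Z, hZ⟩
    apply Subtype.ext
    show Ph' * (Ph * Z * Qh) * Qh' = Z
    have : Ph' * (Ph * Z * Qh) * Qh' = (Ph' * Ph) * Z * (Qh * Qh') := by noncomm_ring
    rw [this, hPP, hQQ, Matrix.one_mul, Matrix.mul_one]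
  · rintro ⟨W, hW⟩
    apply Subtype.ext
    show Ph * (Ph' * W * Qh') * Qh = W
    have : Ph * (Ph' * W * Qh') * Qh = (Ph * Ph') * W * (Qh' * Qh) := by noncomm_ring
    rw [this, hPP', hQQ', Matrix.one_mul, Matrix.mul_one]

lemma card_fin_eq {A : ℕ} (haA : a ≤ A) (R : ℕ) (X : Matrix (Fin a) (Fin a) (ZMod 2)) :
    Nat.card {Y : Matrix (Fin A) (Fin A) (ZMod 2) // Y.rank = R ∧
        ∀ i j : Fin a, Y (Fin.castLE haA i) (Fin.castLE haA j) = X i j} =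
      Nat.card {Z : Matrix (Fin a ⊕ Fin (A - a)) (Fin a ⊕ Fin (A - a)) (ZMod 2) //
        Z.rank = R ∧ ∀ i j : Fin a, Z (Sum.inl i) (Sum.inl j) = X i j} := by
  have hA : a + (A - a) = A := Nat.add_sub_cancel' haA
  set e : Fin a ⊕ Fin (A - a) ≃ Fin A := finSumFinEquiv.trans (finCongr hA) with he_def
  have he : ∀ i : Fin a, e (Sum.inl i) = Fin.castLE haA i := by
    intro i; ext; simp [he_def]
  apply Nat.card_congr
  refine Equiv.subtypeEquiv (Matrix.reindex e.symm e.symm) (fun Y => ?_)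
  simp only [Matrix.rank_reindex, Matrix.rank_submatrix, Matrix.reindex_apply, Matrix.submatrix_apply,
    Equiv.symm_symm, he]

end ExtAux

/-- The number `E_{a,r}^{A,R}` of rank-`R` extensions of a rank-`r` `a×a` matrix to an
`A×A` matrix is well defined: it depends only on `a, r, A, R` and not on the particular
rank-`r` matrix being extended. -/
theorem extension_count_well_defined (a A : ℕ) (haA : a ≤ A) (r R : ℕ)
    (X X' : Matrix (Fin a) (Fin a) (ZMod 2)) (hX : X.rank = r) (hX' : X'.rank = r) :
    Nat.card {Y : Matrix (Fin A) (Fin A) (ZMod 2) // Y.rank = R ∧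
        ∀ i j : Fin a, Y (Fin.castLE haA i) (Fin.castLE haA j) = X i j} =
      Nat.card {Y : Matrix (Fin A) (Fin A) (ZMod 2) // Y.rank = R ∧
        ∀ i j : Fin a, Y (Fin.castLE haA i) (Fin.castLE haA j) = X' i j} := by
  obtain ⟨P, Q, hP, hQ, hPQ⟩ := ExtAux.exists_unit_rel (X := X) (X' := X')
    (hX.trans hX'.symm)
  rw [ExtAux.card_fin_eq haA R X, ExtAux.card_fin_eq haA R X',
    ExtAux.card_cond_eq (A - a) R P Q X hP hQ, hPQ]
end
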